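/- arXiv:0801.3107 — 8 statements merged into one kernel-verified Lean document; each statement's English description precedes it below -/
import Mathlib

section
/- Let Z = A ∪ B be a compact metric space, where A and B are closed subsets of Z. Suppose C ⊂ Z is closed, the set C ∩ A has covering dimension ≤ 0, and C ∩ B can be covered by a finite disjoint family of open subsets of B each of diameter < ε. Then C can be covered by a finite disjoint family of open subsets of Z each of diameter < ε. -/
/-- A topological space has covering dimension ≤ 0 if every finite open cover
admits a pairwise disjoint open refinement (still a cover). -/
def DimLE0 (X : Type*) [TopologicalSpace X] : Prop :=
  ∀ (ι : Type) (U : ι → Set X), Finite ι → (∀ i, IsOpen (U i)) →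
    (⋃ i, U i) = Set.univ →
    ∃ V : ι → Set X, (∀ i, IsOpen (V i)) ∧ (∀ i, V i ⊆ U i) ∧
      Pairwise (Function.onFun Disjoint V) ∧ (⋃ i, V i) = Set.univ

/-- `D0Lt C ε` : the set `C` can be covered by a finite pairwise disjoint family of
open sets, each of diameter `< ε`. -/
def D0Lt {M : Type*} [MetricSpace M] (C : Set M) (ε : ℝ) : Prop :=
  ∃ (ι : Type) (U : ι → Set M), Finite ι ∧ (∀ i, IsOpen (U i)) ∧
    Pairwise (Function.onFun Disjoint U) ∧ (∀ i, Metric.diam (U i) < ε) ∧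
    C ⊆ ⋃ i, U i

/-- Lemma 2.1: if `Z = A ∪ B` is a compact metric space with `A, B` closed,
`C ⊆ Z` is closed, `dim (C ∩ A) ≤ 0` and `d₀(C ∩ B) < ε` (with open-in-`B` sets),
then `d₀(C) < ε`. -/
theorem stmt0 {Z : Type*} [MetricSpace Z] [CompactSpace Z]
    (A B : Set Z) (hA : IsClosed A) (hB : IsClosed B) (hAB : A ∪ B = Set.univ)
    (C : Set Z) (hC : IsClosed C) (ε : ℝ) (hε : 0 < ε)
    (hdim : DimLE0 ↥(C ∩ A))
    (hd0 : ∃ (ι : Type) (U : ι → Set Z), Finite ι ∧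
      (∀ i, ∃ V : Set Z, IsOpen V ∧ U i = V ∩ B) ∧
      Pairwise (Function.onFun Disjoint U) ∧ (∀ i, Metric.diam (U i) < ε) ∧
      C ∩ B ⊆ ⋃ i, U i) :
    D0Lt C ε := by
  classical
  obtain ⟨ι, U, hι, hUVB, hUdisj, hUdiam, hUcov⟩ := hd0
  choose V hVopen hUeq using hUVB
  have hUB : ∀ i, U i ⊆ B := fun i => by rw [hUeq i]; exact Set.inter_subset_right
  have hUV : ∀ i, U i ⊆ V i := fun i => by rw [hUeq i]; exact Set.inter_subset_left
  -- choose a margin r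
  obtain ⟨r, hr0, hrdiam, hrε⟩ :
      ∃ r > 0, (∀ i, Metric.diam (U i) + 4 * r < ε) ∧ r < ε / 4 := by
    haveI := Fintype.ofFinite ι
    rcases isEmpty_or_nonempty ι with h | h
    · exact ⟨ε / 8, by positivity, fun i => (IsEmpty.false i).elim, by linarith⟩
    · set M := Finset.univ.sup' Finset.univ_nonempty (fun i => Metric.diam (U i)) with hM
      have hMlt : M < ε := by
        rw [hM, Finset.sup'_lt_iff]
        exact fun i _ => hUdiam i
      have hM0 : (0:ℝ) ≤ M := le_trans Metric.diam_nonneg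
        (Finset.le_sup' (fun i => Metric.diam (U i)) (Finset.mem_univ h.some))
      refine ⟨min ((ε - M) / 8) (ε / 8), lt_min (by linarith) (by linarith), fun i => ?_, ?_⟩
      · have h1 : Metric.diam (U i) ≤ M := Finset.le_sup' (fun i => Metric.diam (U i)) (Finset.mem_univ i)
        have h2 := min_le_left ((ε - M) / 8) (ε / 8)
        linarith
      · have := min_le_right ((ε - M) / 8) (ε / 8); linarith
  set F : Set Z := C ∩ A with hF
  have hFclosed : IsClosed F := hC.inter hA
  have hFcomp : IsCompact F := hFclosed.isCompact
  haveI : CompactSpace ↥F := isCompact_iff_compactSpace.mp hFcomp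
  set O : ι → Set Z := fun i => V i ∩ Metric.thickening r (U i) with hO
  have hOopen : ∀ i, IsOpen (O i) := fun i => (hVopen i).inter Metric.isOpen_thickening
  have hUO : ∀ i, U i ⊆ O i := fun i =>
    Set.subset_inter (hUV i) (Metric.self_subset_thickening hr0 _)
  set K : Set Z := F \ ⋃ i, O i with hKdef
  have hKcomp : IsCompact K := (hFclosed.sdiff (isOpen_iUnion hOopen)).isCompact
  have hKB : ∀ x ∈ K, x ∉ B := by
    intro x hx hxB
    obtain ⟨i, hxU⟩ := Set.mem_iUnion.mp (hUcov ⟨hx.1.1, hxB⟩)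
    exact hx.2 (Set.mem_iUnion.mpr ⟨i, hUO i hxU⟩)
  have hballs : ∀ x ∈ K, ∃ ρ, 0 < ρ ∧ ρ ≤ ε / 8 ∧ Metric.ball x ρ ∩ B = ∅ := by
    intro x hx
    obtain ⟨ρ, hρ0, hρ⟩ := Metric.isOpen_iff.mp hB.isOpen_compl x (hKB x hx)
    refine ⟨min ρ (ε / 8), by positivity, min_le_right _ _, ?_⟩
    apply Set.eq_empty_of_forall_notMem
    rintro y ⟨hy1, hy2⟩
    exact hρ (Metric.ball_subset_ball (min_le_left _ _) hy1) hy2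
  choose! ρ hρ0 hρle hρB using hballs
  obtain ⟨t, htK, htcov⟩ := hKcomp.elim_nhds_subcover (fun x => Metric.ball x (ρ x))
    (fun x hx => Metric.ball_mem_nhds x (hρ0 x hx))
  set n := t.card with hn
  set e : Fin n ≃ {x // x ∈ t} := t.equivFin.symm with he
  set c : Fin n → Z := fun k => ((e k : {x // x ∈ t}) : Z) with hc
  have hcK : ∀ k, c k ∈ K := fun k => htK _ (e k).2
  set D : Fin n → Set Z := fun k => Metric.ball (c k) (ρ (c k)) with hD
  have hDB : ∀ k, D k ∩ B = ∅ := fun k => hρB _ (hcK k)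
  -- the finite open cover of F
  set Ucov : (ι ⊕ Fin n) → Set ↥F := fun j =>
    Sum.elim (fun i => Subtype.val ⁻¹' O i) (fun k => Subtype.val ⁻¹' D k) j with hUcovdef
  have hUcovOpen : ∀ j, IsOpen (Ucov j) := by
    rintro (i | k)
    · exact (hOopen i).preimage continuous_subtype_val
    · exact Metric.isOpen_ball.preimage continuous_subtype_val
  have hUcovCov : (⋃ j, Ucov j) = Set.univ := by
    ext ⟨x, hxF⟩
    simp only [Set.mem_univ, iff_true, Set.mem_iUnion]
    by_cases hx : x ∈ ⋃ i, O i
    · obtain ⟨i, hi⟩ := Set.mem_iUnion.mp hx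
      exact ⟨Sum.inl i, hi⟩
    · have hxK : x ∈ K := ⟨hxF, hx⟩
      obtain ⟨y, hyt, hy⟩ := Set.mem_iUnion₂.mp (htcov hxK)
      refine ⟨Sum.inr (e.symm ⟨y, hyt⟩), ?_⟩
      show x ∈ D (e.symm ⟨y, hyt⟩)
      rw [hD]
      simpa [hc, e.apply_symm_apply] using hy
  obtain ⟨P, hPopen, hPsub, hPdisj, hPcov⟩ :=
    hdim (ι ⊕ Fin n) Ucov inferInstance hUcovOpen hUcovCov
  -- the pieces of the partition are compact
  have hPclosed : ∀ j, IsClosed (P j) := by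
    intro j
    rw [← isOpen_compl_iff]
    have hcompl : (P j)ᶜ = ⋃ j' ∈ ({j}ᶜ : Set (ι ⊕ Fin n)), P j' := by
      ext x
      simp only [Set.mem_compl_iff, Set.mem_iUnion, Set.mem_singleton_iff, exists_prop]
      constructor
      · intro hx
        have hxu : x ∈ ⋃ j', P j' := hPcov ▸ Set.mem_univ x
        obtain ⟨j', hj'⟩ := Set.mem_iUnion.mp hxu
        exact ⟨j', fun h => hx (h ▸ hj'), hj'⟩
      · rintro ⟨j', hne, hj'⟩ hx
        exact Set.disjoint_left.mp (hPdisj hne) hj' hx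
    rw [hcompl]
    exact isOpen_biUnion fun j' _ => hPopen j'
  set Q : (ι ⊕ Fin n) → Set Z := fun j => Subtype.val '' P j with hQ
  have hQcomp : ∀ j, IsCompact (Q j) :=
    fun j => ((hPclosed j).isCompact).image continuous_subtype_val
  have hQdisj : ∀ j m, j ≠ m → Disjoint (Q j) (Q m) := fun j m h =>
    (Set.disjoint_image_iff Subtype.val_injective).mpr (hPdisj h)
  have hQsubO : ∀ i, Q (Sum.inl i) ⊆ O i := by
    rintro i _ ⟨⟨x, hxF⟩, hxP, rfl⟩
    exact hPsub _ hxP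
  have hQsubD : ∀ k, Q (Sum.inr k) ⊆ D k := by
    rintro k _ ⟨⟨x, hxF⟩, hxP, rfl⟩
    exact hPsub _ hxP
  -- the separated family R
  set E : (ι ⊕ Fin n) → Set Z := Sum.elim U (fun _ => (∅ : Set Z)) with hE
  set R : (ι ⊕ Fin n) → Set Z := fun j => Q j ∪ E j with hR
  have hUdisjV : ∀ i i', i ≠ i' → ∀ x, x ∈ U i → x ∉ V i' := by
    intro i i' hne x hxU hxV
    have hxU' : x ∈ U i' := by rw [hUeq i']; exact ⟨hxV, hUB i hxU⟩
    exact Set.disjoint_left.mp (hUdisj hne) hxU hxU'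
  have hclUB : ∀ i, closure (U i) ⊆ B := fun i => closure_minimal (hUB i) hB
  have hclUV : ∀ i i', i ≠ i' → ∀ x, x ∈ closure (U i) → x ∉ V i' := by
    intro i i' hne x hx
    have hsub : closure (U i) ⊆ B ∩ (V i')ᶜ :=
      closure_minimal (fun y hy => ⟨hUB i hy, hUdisjV i i' hne y hy⟩)
        (hB.inter (hVopen i').isClosed_compl)
    exact (hsub hx).2
  have hQB_inr : ∀ k x, x ∈ Q (Sum.inr k) → x ∉ B := by
    intro k x hx hxB
    exact Set.eq_empty_iff_forall_notMem.mp (hDB k) x ⟨hQsubD k hx, hxB⟩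
  have hclR : ∀ j, closure (R j) = Q j ∪ closure (E j) := by
    intro j
    rw [hR]
    simp only []
    rw [closure_union, (hQcomp j).isClosed.closure_eq]
  have hsep : ∀ j m, j ≠ m → ∀ x ∈ R m, x ∉ closure (R j) := by
    intro j m hne x hxm hxcl
    rw [hclR j] at hxcl
    rcases hxcl with hxQj | hxEj
    · -- x ∈ Q j
      rcases hxm with hxQm | hxEm
      · exact Set.disjoint_left.mp (hQdisj j m hne) hxQj hxQm
      · -- x ∈ E m, so m = inl i' and x ∈ U i'
        rcases m with i' | k'
        · rcases j with i | k
          · have hne' : i' ≠ i := fun h => hne (by rw [h])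
            exact hUdisjV i' i hne' x hxEm (hQsubO i hxQj).1
          · exact hQB_inr k x hxQj (hUB i' hxEm)
        · exact hxEm.elim
    · -- x ∈ closure (E j), so j = inl i and x ∈ closure (U i)
      rcases j with i | k
      · rcases hxm with hxQm | hxEm
        · rcases m with i' | k'
          · have hne' : i ≠ i' := fun h => hne (by rw [h])
            exact hclUV i i' hne' x hxEj (hQsubO i' hxQm).1
          · exact hQB_inr k' x hxQm (hclUB i hxEj)
        · rcases m with i' | k'
          · have hne' : i ≠ i' := fun h => hne (by rw [h])
            exact hclUV i i' hne' x hxEj (hUV i' hxEm)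
          · exact hxEm.elim
      · rw [show E (Sum.inr k) = (∅ : Set Z) from rfl, closure_empty] at hxEj
        exact hxEj
  -- diameter control on R
  have hbdd : ∀ s : Set Z, Bornology.IsBounded s :=
    fun s => (isCompact_univ.isBounded).subset (Set.subset_univ s)
  have hRsubthick : ∀ i, R (Sum.inl i) ⊆ Metric.thickening r (U i) := by
    rintro i x (hx | hx)
    · exact (hQsubO i hx).2
    · exact Metric.self_subset_thickening hr0 _ hx
  have hRsubball : ∀ k, R (Sum.inr k) ⊆ D k := by
    rintro k x (hx | hx)
    · exact hQsubD k hx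
    · exact hx.elim
  -- the final open sets
  set rest : (ι ⊕ Fin n) → Set Z := fun j => ⋃ j' ∈ ({j}ᶜ : Set (ι ⊕ Fin n)), R j'
    with hrest
  set W : (ι ⊕ Fin n) → Set Z := fun j =>
    Metric.thickening r (R j) ∩
      {x | EMetric.infEdist x (R j) < EMetric.infEdist x (rest j)} with hW
  refine ⟨ι ⊕ Fin n, W, inferInstance, ?_, ?_, ?_, ?_⟩
  · intro j
    exact Metric.isOpen_thickening.inter
      (isOpen_lt EMetric.continuous_infEdist EMetric.continuous_infEdist)
  · intro a b hab
    rw [Function.onFun, Set.disjoint_left]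
    intro x hxa hxb
    have hsub1 : R b ⊆ rest a :=
      Set.subset_biUnion_of_mem (show b ∈ ({a}ᶜ : Set (ι ⊕ Fin n)) from hab.symm)
    have hsub2 : R a ⊆ rest b :=
      Set.subset_biUnion_of_mem (show a ∈ ({b}ᶜ : Set (ι ⊕ Fin n)) from hab)
    have h1 : EMetric.infEdist x (R a) < EMetric.infEdist x (R b) :=
      lt_of_lt_of_le hxa.2 (EMetric.infEdist_anti hsub1)
    have h2 : EMetric.infEdist x (R b) < EMetric.infEdist x (R a) :=
      lt_of_lt_of_le hxb.2 (EMetric.infEdist_anti hsub2)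
    exact lt_asymm h1 h2
  · rintro (i | k)
    · have hsub : W (Sum.inl i) ⊆ Metric.thickening (r + r) (U i) :=
        Set.inter_subset_left.trans
          ((Metric.thickening_subset_of_subset r (hRsubthick i)).trans
            (Metric.thickening_thickening_subset r r (U i)))
      calc Metric.diam (W (Sum.inl i))
          ≤ Metric.diam (Metric.thickening (r + r) (U i)) :=
            Metric.diam_mono hsub (hbdd _)
        _ ≤ Metric.diam (U i) + 2 * (r + r) :=
            Metric.diam_thickening_le _ (by linarith)
        _ < ε := by have := hrdiam i; linarith
    · have hsub : W (Sum.inr k) ⊆ Metric.ball (c k) (ρ (c k) + r) := by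
        intro x hx
        obtain ⟨y, hy, hxy⟩ := Metric.mem_thickening_iff.mp
          (Set.inter_subset_left.trans
            (Metric.thickening_subset_of_subset r (hRsubball k)) hx)
        have hyc : dist y (c k) < ρ (c k) := by
          simpa [hD, Metric.mem_ball] using hy
        have : dist x (c k) ≤ dist x y + dist y (c k) := dist_triangle _ _ _
        exact Metric.mem_ball.mpr (by linarith)
      have hρ' : ρ (c k) ≤ ε / 8 := hρle _ (hcK k)
      have hρ0' : 0 < ρ (c k) := hρ0 _ (hcK k)
      calc Metric.diam (W (Sum.inr k))
          ≤ Metric.diam (Metric.ball (c k) (ρ (c k) + r)) :=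
            Metric.diam_mono hsub (hbdd _)
        _ ≤ 2 * (ρ (c k) + r) := Metric.diam_ball (by linarith)
        _ < ε := by linarith
  · intro x hxC
    have hxAB : x ∈ A ∪ B := hAB ▸ Set.mem_univ x
    have hmem : ∃ m, x ∈ R m := by
      rcases hxAB with hxA | hxB
      · have hxF : x ∈ F := ⟨hxC, hxA⟩
        have hxu : (⟨x, hxF⟩ : ↥F) ∈ ⋃ j, P j := hPcov ▸ Set.mem_univ _
        obtain ⟨j, hj⟩ := Set.mem_iUnion.mp hxu
        exact ⟨j, Or.inl ⟨⟨x, hxF⟩, hj, rfl⟩⟩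
      · obtain ⟨i, hi⟩ := Set.mem_iUnion.mp (hUcov ⟨hxC, hxB⟩)
        exact ⟨Sum.inl i, Or.inr hi⟩
    obtain ⟨m, hm⟩ := hmem
    have h0 : EMetric.infEdist x (R m) = 0 := EMetric.infEdist_zero_of_mem hm
    have hxnot : x ∉ closure (rest m) := by
      intro hxcl
      have hsubcl : closure (rest m) ⊆ ⋃ j ∈ ({m}ᶜ : Set (ι ⊕ Fin n)), closure (R j) := by
        apply closure_minimal
        · exact Set.iUnion₂_mono fun j _ => subset_closure
        · exact (Set.toFinite _).isClosed_biUnion fun j _ => isClosed_closure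
      obtain ⟨j, hjm, hj⟩ := Set.mem_iUnion₂.mp (hsubcl hxcl)
      exact hsep j m hjm x hm hj
    have hpos : 0 < EMetric.infEdist x (rest m) := by
      rw [pos_iff_ne_zero]
      intro h0'
      exact hxnot (EMetric.mem_closure_iff_infEdist_zero.mpr h0')
    refine Set.mem_iUnion.mpr ⟨m, Metric.self_subset_thickening hr0 _ hm, ?_⟩
    show EMetric.infEdist x (R m) < EMetric.infEdist x (rest m)
    rw [h0]
    exact hpos
end

section
/- Let X be a compact metric space, M a metric space, and ε > 0. The set C(X,M;ε) of all continuous maps g : X → M such that for every a ∈ M the fiber g⁻¹(a) can be covered by a finite disjoint family of open subsets of X of diameter < ε, is open in C(X,M) with the uniform convergence topology. -/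
lemma D0Lt.mono {M : Type*} [MetricSpace M] {C C' : Set M} {ε : ℝ}
    (h : D0Lt C ε) (hsub : C' ⊆ C) : D0Lt C' ε := by
  obtain ⟨ι, U, h1, h2, h3, h4, h5⟩ := h
  exact ⟨ι, U, h1, h2, h3, h4, hsub.trans h5⟩

lemma D0Lt.empty {M : Type*} [MetricSpace M] {ε : ℝ} : D0Lt (∅ : Set M) ε :=
  ⟨Empty, fun i => ∅, inferInstance, fun i => isOpen_empty,
    fun i => i.elim, fun i => i.elim, by simp⟩

/-- The set `C(X,M;ε)` of all continuous maps `g : X → M` each of whose fibers can be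
covered by a finite disjoint family of open subsets of `X` of diameter `< ε`
is open in `C(X,M)` with the uniform convergence topology. -/
theorem stmt2 {X M : Type*} [MetricSpace X] [CompactSpace X] [MetricSpace M]
    (ε : ℝ) (hε : 0 < ε) :
    IsOpen {g : C(X, M) | ∀ a : M, D0Lt (⇑g ⁻¹' {a}) ε} := by
  rw [Metric.isOpen_iff]
  intro g hg
  by_cases hX : Nonempty X
  · -- key step: every point of M has a ball whose preimage is D0Lt-covered
    have key : ∀ a : M, ∃ r > 0, D0Lt (⇑g ⁻¹' Metric.ball a r) ε := by
      intro a
      obtain ⟨ι, U, h1, h2, h3, h4, h5⟩ := hg a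
      have hVopen : IsOpen (⋃ i, U i) := isOpen_iUnion h2
      have hKc : IsCompact (⇑g '' (⋃ i, U i)ᶜ) :=
        (hVopen.isClosed_compl.isCompact).image g.continuous
      have haK : a ∉ ⇑g '' (⋃ i, U i)ᶜ := by
        rintro ⟨x, hx, rfl⟩
        exact hx (h5 rfl)
      obtain ⟨r, hr, hball⟩ := Metric.isOpen_iff.1 hKc.isClosed.isOpen_compl a haK
      refine ⟨r, hr, ⟨ι, U, h1, h2, h3, h4, ?_⟩⟩
      intro x hx
      by_contra hxV
      exact hball hx ⟨x, hxV, rfl⟩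
    choose r hr hD using key
    have hK : IsCompact (Set.range ⇑g) := isCompact_range g.continuous
    obtain ⟨t, ht⟩ := hK.elim_finite_subcover (fun a => Metric.ball a (r a / 2))
      (fun a => Metric.isOpen_ball)
      (by intro y hy; exact Set.mem_iUnion.2 ⟨y, Metric.mem_ball_self (by linarith [hr y])⟩)
    have htne : t.Nonempty := by
      obtain ⟨x⟩ := hX
      have := ht ⟨x, rfl⟩
      simp only [Set.mem_iUnion] at this
      obtain ⟨b, hb, -⟩ := this
      exact ⟨b, hb⟩
    set δ : ℝ := t.inf' htne (fun a => r a / 4) with hδdef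
    have hδpos : 0 < δ := by
      rw [hδdef, Finset.lt_inf'_iff]
      intro b hb; linarith [hr b]
    refine ⟨δ, hδpos, ?_⟩
    intro h hh a
    have hdist : ∀ x : X, dist (g x) (h x) < δ := by
      intro x
      calc dist (g x) (h x) ≤ dist g h := ContinuousMap.dist_apply_le_dist x
        _ = dist h g := dist_comm _ _
        _ < δ := hh
    have hsub : ⇑h ⁻¹' {a} ⊆ ⇑g ⁻¹' Metric.ball a δ := by
      intro x hx
      simp only [Set.mem_preimage, Set.mem_singleton_iff] at hx
      simpa [Metric.mem_ball, hx] using hdist x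
    by_cases hne : (Metric.ball a δ ∩ Set.range ⇑g).Nonempty
    · obtain ⟨y, hy, hyg⟩ := hne
      have := ht hyg
      simp only [Set.mem_iUnion] at this
      obtain ⟨b, hb, hyb⟩ := this
      have hδb : δ ≤ r b / 4 := Finset.inf'_le _ hb
      refine ((hD b).mono ?_).mono hsub
      intro z hz
      simp only [Set.mem_preimage, Metric.mem_ball] at hz ⊢
      have h1 : dist (g z) b ≤ dist (g z) a + dist a y + dist y b := dist_triangle4 _ _ _ _
      have h2 : dist a y < δ := by rwa [dist_comm]
      have h3 : dist y b < r b / 2 := hyb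
      linarith
    · refine D0Lt.empty.mono ?_
      intro x hx
      exact absurd ⟨g x, hsub hx, x, rfl⟩ hne
  · refine ⟨1, one_pos, ?_⟩
    intro h _ a
    refine D0Lt.empty.mono ?_
    intro x _
    exact absurd ⟨x⟩ hX
end

section
/- Let X be a compact metric space and M a completely metrizable space. Then the set of all continuous maps g : X → M all of whose fibers are zero-dimensional is a Gδ subset of C(X,M) with the uniform convergence topology. -/
open Metric Set Function

section Aux

variable {X M : Type*} [MetricSpace X] [CompactSpace X] [MetricSpace M]

/-- Finitely many pairwise disjoint compact sets admit pairwise disjoint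
thickenings, with radius as small as we like. -/
lemma exists_disjoint_thickening {n : ℕ} (K : Fin n → Set X)
    (hK : ∀ j, IsCompact (K j)) (hd : Pairwise (Function.onFun Disjoint K))
    {ε : ℝ} (hε : 0 < ε) :
    ∃ r, 0 < r ∧ r ≤ ε ∧
      Pairwise (Function.onFun Disjoint fun j => Metric.thickening r (K j)) := by
  have h : ∀ p : Fin n × Fin n, ∃ δ, 0 < δ ∧ (p.1 ≠ p.2 →
      Disjoint (Metric.thickening δ (K p.1)) (Metric.thickening δ (K p.2))) := by
    intro p
    by_cases hp : p.1 ≠ p.2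
    · obtain ⟨δ, hδ, hdis⟩ := (hd hp).exists_thickenings (hK p.1) (hK p.2).isClosed
      exact ⟨δ, hδ, fun _ => hdis⟩
    · exact ⟨1, one_pos, fun h => absurd h hp⟩
  choose δ hδpos hδ using h
  rcases isEmpty_or_nonempty (Fin n × Fin n) with he | hne
  · exact ⟨ε, hε, le_refl _, fun i j hij => (he.false (i, j)).elim⟩
  · have hu : (Finset.univ : Finset (Fin n × Fin n)).Nonempty := Finset.univ_nonempty
    refine ⟨min ε (Finset.univ.inf' hu δ), lt_min hε ?_, min_le_left _ _, ?_⟩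
    · exact (Finset.lt_inf'_iff hu).mpr fun p _ => hδpos p
    · intro i j hij
      have hle : min ε (Finset.univ.inf' hu δ) ≤ δ (i, j) :=
        le_trans (min_le_right _ _) (Finset.inf'_le _ (Finset.mem_univ _))
      exact Disjoint.mono (Metric.thickening_mono hle _) (Metric.thickening_mono hle _)
        (hδ (i, j) hij)

lemma diam_thickening_le' {s : Set X} {r d : ℝ} (hr : 0 < r) (hd : 0 ≤ d)
    (h : ∀ x ∈ s, ∀ y ∈ s, dist x y ≤ d) :
    Metric.diam (Metric.thickening r s) ≤ d + 2 * r := by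
  apply Metric.diam_le_of_forall_dist_le (by linarith)
  intro x hx y hy
  obtain ⟨a, ha, hxa⟩ := Metric.mem_thickening_iff.mp hx
  obtain ⟨b, hb, hyb⟩ := Metric.mem_thickening_iff.mp hy
  have h4 := dist_triangle4 x a b y
  have hby : dist b y = dist y b := dist_comm _ _
  have := h a ha b hb
  linarith [dist_triangle4 x a b y, hxa, hyb]

/-- `g` admits, around every fiber, a finite pairwise disjoint open cover of mesh `≤ ε`. -/
def GoodCover (g : C(X, M)) (ε : ℝ) : Prop :=
  ∀ y : M, ∃ (n : ℕ) (W : Fin n → Set X), (∀ j, IsOpen (W j)) ∧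
    Pairwise (Function.onFun Disjoint W) ∧ (∀ j, Metric.diam (W j) ≤ ε) ∧
    (⇑g ⁻¹' {y}) ⊆ ⋃ j, W j

lemma goodCover_of_empty {g : C(X, M)} {ε : ℝ} {y : M} (h : ⇑g ⁻¹' {y} = ∅) :
    ∃ (n : ℕ) (W : Fin n → Set X), (∀ j, IsOpen (W j)) ∧
    Pairwise (Function.onFun Disjoint W) ∧ (∀ j, Metric.diam (W j) ≤ ε) ∧
    (⇑g ⁻¹' {y}) ⊆ ⋃ j, W j := by
  refine ⟨0, fun _ => ∅, fun j => j.elim0, ?_, fun j => j.elim0, by rw [h]; exact empty_subset _⟩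
  intro i j _
  exact i.elim0

lemma goodCover_open (ε : ℝ) : IsOpen {g : C(X, M) | GoodCover g ε} := by
  rw [Metric.isOpen_iff]
  intro g hg
  have step1 : ∀ y : M, ∃ η, 0 < η ∧ ∃ (n : ℕ) (W : Fin n → Set X), (∀ j, IsOpen (W j)) ∧
      Pairwise (Function.onFun Disjoint W) ∧ (∀ j, Metric.diam (W j) ≤ ε) ∧
      ∀ x : X, dist (g x) y < η → x ∈ ⋃ j, W j := by
    intro y
    obtain ⟨n, W, hWo, hWd, hWdiam, hWc⟩ := hg y
    have hSo : IsOpen (⋃ j, W j) := isOpen_iUnion hWo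
    have hKc : IsCompact ((⋃ j, W j)ᶜ) := hSo.isClosed_compl.isCompact
    have himg : IsCompact (g '' (⋃ j, W j)ᶜ) := hKc.image g.continuous
    have hy : y ∈ (g '' (⋃ j, W j)ᶜ)ᶜ := by
      rintro ⟨x, hx, hgx⟩
      exact hx (hWc (show x ∈ ⇑g ⁻¹' {y} by simp [hgx]))
    obtain ⟨η, hη, hball⟩ := Metric.isOpen_iff.mp himg.isClosed.isOpen_compl y hy
    refine ⟨η, hη, n, W, hWo, hWd, hWdiam, fun x hx => ?_⟩
    by_contra hxS
    exact hball (Metric.mem_ball.mpr hx) ⟨x, hxS, rfl⟩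
  choose η hηpos nn WW hWo hWd hWdiam hWprop using step1
  have hcover : Set.range g ⊆ ⋃ y : M, Metric.ball y (η y / 4) := by
    rintro _ ⟨x, rfl⟩
    exact Set.mem_iUnion.mpr ⟨g x, Metric.mem_ball_self (by have := hηpos (g x); linarith)⟩
  obtain ⟨t, ht⟩ := (isCompact_range g.continuous).elim_finite_subcover
    (fun y => Metric.ball y (η y / 4)) (fun y => Metric.isOpen_ball) hcover
  rcases t.eq_empty_or_nonempty with rfl | htne
  · have hX : IsEmpty X := ⟨fun x => by simpa using ht ⟨x, rfl⟩⟩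
    refine ⟨1, one_pos, fun h _ => fun y => goodCover_of_empty ?_⟩
    exact Set.eq_empty_of_isEmpty _
  · refine ⟨t.inf' htne (fun y => η y / 4),
      (Finset.lt_inf'_iff htne).mpr (fun y _ => by have := hηpos y; linarith), ?_⟩
    intro h hh y
    rcases eq_empty_or_nonempty (⇑h ⁻¹' {y}) with hfib | ⟨x₀, hx₀⟩
    · exact goodCover_of_empty hfib
    · have hx₀y : h x₀ = y := hx₀
      obtain ⟨yk, hykt, hyk⟩ := Set.mem_iUnion₂.mp (ht ⟨x₀, rfl⟩)
      have hδle : t.inf' htne (fun y => η y / 4) ≤ η yk / 4 := Finset.inf'_le _ hykt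
      have hdist_hg : dist h g < t.inf' htne (fun y => η y / 4) := Metric.mem_ball.mp hh
      have hgy : dist (g x₀) yk < η yk / 4 := Metric.mem_ball.mp hyk
      have hy0 : dist y (g x₀) < η yk / 4 := by
        have h1 : dist (h x₀) (g x₀) ≤ dist h g := ContinuousMap.dist_apply_le_dist x₀
        rw [← hx₀y]
        linarith
      have hyyk : dist y yk < η yk / 2 := by
        have := dist_triangle y (g x₀) yk
        linarith
      refine ⟨nn yk, WW yk, hWo yk, hWd yk, hWdiam yk, fun x hx => ?_⟩
      apply hWprop yk
      have hxy : h x = y := hx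
      have h1 : dist (g x) (h x) ≤ dist g h := ContinuousMap.dist_apply_le_dist x
      have h2 : dist g h = dist h g := dist_comm _ _
      have h3 := dist_triangle (g x) y yk
      rw [hxy] at h1
      have := hηpos yk
      calc dist (g x) yk ≤ dist (g x) y + dist y yk := dist_triangle _ _ _
        _ < η yk / 4 + η yk / 2 := by
            apply add_lt_add_of_lt_of_lt _ hyyk
            calc dist (g x) y ≤ dist h g := by rw [← h2]; exact h1
              _ < t.inf' htne (fun y => η y / 4) := hdist_hg
              _ ≤ η yk / 4 := hδle
        _ < η yk := by linarith

lemma dimLE0_of_goodCover {g : C(X, M)}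
    (hg : ∀ n : ℕ, GoodCover g (1 / (n + 1))) (y : M) :
    DimLE0 ↥(⇑g ⁻¹' {y}) := by
  intro ι U hι hUo hUc
  rcases isEmpty_or_nonempty ↥(⇑g ⁻¹' {y}) with hFe | hFne
  · refine ⟨fun _ => ∅, fun i => isOpen_empty, fun i => empty_subset _, ?_, ?_⟩
    · intro i j _
      exact disjoint_bot_left
    · rw [Set.univ_eq_empty_iff.mpr hFe]
      exact Set.eq_empty_of_isEmpty _
  · haveI : CompactSpace ↥(⇑g ⁻¹' {y}) :=
      isCompact_iff_compactSpace.mp ((isClosed_singleton.preimage g.continuous).isCompact)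
    obtain ⟨δ, hδpos, hLeb⟩ := lebesgue_number_lemma_of_metric
      (isCompact_univ (X := ↥(⇑g ⁻¹' {y}))) hUo (by rw [hUc])
    obtain ⟨N, hN⟩ := exists_nat_gt (1 / δ)
    have hNδ : 1 / ((N : ℝ) + 1) < δ := by
      have h1 : 1 / δ < (N : ℝ) + 1 := hN.trans (lt_add_one _)
      have h2 : 1 < ((N : ℝ) + 1) * δ := (div_lt_iff₀ hδpos).mp h1
      have h3 : (0 : ℝ) < (N : ℝ) + 1 := by positivity
      rw [div_lt_iff₀ h3]
      linarith
    obtain ⟨n, W, hWo, hWd, hWdiam, hWc⟩ := hg N y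
    set V' : Fin n → Set ↥(⇑g ⁻¹' {y}) := fun j => Subtype.val ⁻¹' (W j) with hV'
    have hV'o : ∀ j, IsOpen (V' j) := fun j => (hWo j).preimage continuous_subtype_val
    have hV'c : ∀ x : ↥(⇑g ⁻¹' {y}), ∃ j, x ∈ V' j := by
      intro x
      obtain ⟨j, hj⟩ := Set.mem_iUnion.mp (hWc x.2)
      exact ⟨j, hj⟩
    have hV'd : Pairwise (Function.onFun Disjoint V') :=
      fun i j hij => Disjoint.preimage _ (hWd hij)
    have hιne : Nonempty ι := by
      obtain ⟨x⟩ := hFne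
      have : x ∈ ⋃ i, U i := hUc ▸ Set.mem_univ x
      obtain ⟨i, _⟩ := Set.mem_iUnion.mp this
      exact ⟨i⟩
    have hsmall : ∀ j, ∃ i, V' j ⊆ U i := by
      intro j
      rcases (V' j).eq_empty_or_nonempty with he | ⟨x, hx⟩
      · exact ⟨Classical.arbitrary ι, he ▸ empty_subset _⟩
      · obtain ⟨i, hi⟩ := hLeb x (Set.mem_univ x)
        refine ⟨i, fun z hz => hi ?_⟩
        have hb : Bornology.IsBounded (W j) :=
          (isCompact_univ.isBounded).subset (Set.subset_univ _)
        have hdz : dist z x ≤ Metric.diam (W j) := by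
          rw [Subtype.dist_eq]
          exact Metric.dist_le_diam_of_mem hb hz hx
        exact Metric.mem_ball.mpr (lt_of_le_of_lt (hdz.trans (hWdiam j)) hNδ)
    choose f hf using hsmall
    refine ⟨fun i => ⋃ j, ⋃ _ : f j = i, V' j, ?_, ?_, ?_, ?_⟩
    · exact fun i => isOpen_iUnion fun j => isOpen_iUnion fun _ => hV'o j
    · exact fun i => Set.iUnion_subset fun j => Set.iUnion_subset fun hj => hj ▸ hf j
    · intro i i' hne
      rw [Function.onFun, Set.disjoint_left]
      intro x hx hx'
      simp only [Set.mem_iUnion] at hx hx'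
      obtain ⟨j, hj, hxj⟩ := hx
      obtain ⟨j', hj', hxj'⟩ := hx'
      have hjj : j ≠ j' := fun h => hne (hj ▸ h ▸ hj')
      exact Set.disjoint_left.mp (hV'd hjj) hxj hxj'
    · apply Set.Subset.antisymm (Set.subset_univ _)
      intro x _
      obtain ⟨j, hj⟩ := hV'c x
      exact Set.mem_iUnion.mpr ⟨f j, Set.mem_iUnion.mpr ⟨j, Set.mem_iUnion.mpr ⟨rfl, hj⟩⟩⟩

lemma goodCover_of_dimLE0 {g : C(X, M)} (hdim : ∀ y : M, DimLE0 ↥(⇑g ⁻¹' {y}))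
    {ε : ℝ} (hε : 0 < ε) : GoodCover g ε := by
  intro y
  haveI : CompactSpace ↥(⇑g ⁻¹' {y}) :=
    isCompact_iff_compactSpace.mp ((isClosed_singleton.preimage g.continuous).isCompact)
  obtain ⟨t, ht⟩ := isCompact_univ.elim_finite_subcover
    (fun z : ↥(⇑g ⁻¹' {y}) => Metric.ball z (ε / 8)) (fun _ => Metric.isOpen_ball)
    (fun x _ => Set.mem_iUnion.mpr ⟨x, Metric.mem_ball_self (by positivity)⟩)
  set e := t.equivFin.symm with he
  set U : Fin t.card → Set ↥(⇑g ⁻¹' {y}) := fun j => Metric.ball ((e j : ↥(⇑g ⁻¹' {y}))) (ε / 8)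
    with hU
  have hUc : (⋃ j, U j) = Set.univ := by
    apply Set.Subset.antisymm (Set.subset_univ _)
    intro x _
    obtain ⟨z, hzt, hz⟩ := Set.mem_iUnion₂.mp (ht (Set.mem_univ x))
    refine Set.mem_iUnion.mpr ⟨e.symm ⟨z, hzt⟩, ?_⟩
    simp only [hU, Equiv.apply_symm_apply]
    exact hz
  obtain ⟨V, hVo, hVU, hVd, hVc⟩ := hdim y (Fin t.card) U inferInstance
    (fun j => Metric.isOpen_ball) hUc
  have hVcl : ∀ j, IsClosed (V j) := by
    intro j
    rw [← isOpen_compl_iff]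
    have hcompl : (V j)ᶜ = ⋃ j', ⋃ _ : j' ≠ j, V j' := by
      ext x
      simp only [Set.mem_compl_iff, Set.mem_iUnion]
      constructor
      · intro hx
        have hx' : x ∈ ⋃ j', V j' := hVc ▸ Set.mem_univ x
        obtain ⟨j', hj'⟩ := Set.mem_iUnion.mp hx'
        exact ⟨j', fun h => hx (h ▸ hj'), hj'⟩
      · rintro ⟨j', hne, hx'⟩ hx
        exact Set.disjoint_left.mp (hVd hne) hx' hx
    rw [hcompl]
    exact isOpen_iUnion fun j' => isOpen_iUnion fun _ => hVo j'
  set K : Fin t.card → Set X := fun j => Subtype.val '' (V j) with hK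
  have hKc : ∀ j, IsCompact (K j) :=
    fun j => ((hVcl j).isCompact).image continuous_subtype_val
  have hKd : Pairwise (Function.onFun Disjoint K) := by
    intro i j hij
    rw [Function.onFun, Set.disjoint_left]
    rintro x ⟨a, ha, rfl⟩ ⟨b, hb, hab⟩
    have hab' : b = a := Subtype.val_injective hab
    exact Set.disjoint_left.mp (hVd hij) ha (hab' ▸ hb)
  have hKdiam : ∀ j, ∀ x ∈ K j, ∀ z ∈ K j, dist x z ≤ ε / 4 := by
    rintro j _ ⟨a, ha, rfl⟩ _ ⟨b, hb, rfl⟩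
    have ha' : dist a (e j : ↥(⇑g ⁻¹' {y})) < ε / 8 := Metric.mem_ball.mp (hVU j ha)
    have hb' : dist b (e j : ↥(⇑g ⁻¹' {y})) < ε / 8 := Metric.mem_ball.mp (hVU j hb)
    rw [← Subtype.dist_eq]
    calc dist a b ≤ dist a (e j : ↥(⇑g ⁻¹' {y})) + dist (e j : ↥(⇑g ⁻¹' {y})) b :=
          dist_triangle _ _ _
      _ ≤ ε / 4 := by rw [dist_comm (e j : ↥(⇑g ⁻¹' {y})) b]; linarith
  obtain ⟨r, hrpos, hrle, hrd⟩ := exists_disjoint_thickening K hKc hKd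
    (ε := ε / 8) (by positivity)
  refine ⟨t.card, fun j => Metric.thickening r (K j), fun j => Metric.isOpen_thickening,
    hrd, ?_, ?_⟩
  · intro j
    have := diam_thickening_le' (s := K j) hrpos (by positivity) (hKdiam j)
    linarith
  · intro x hx
    have hx' : (⟨x, hx⟩ : ↥(⇑g ⁻¹' {y})) ∈ ⋃ j, V j := hVc ▸ Set.mem_univ _
    obtain ⟨j, hj⟩ := Set.mem_iUnion.mp hx'
    exact Set.mem_iUnion.mpr
      ⟨j, Metric.self_subset_thickening hrpos _ ⟨⟨x, hx⟩, hj, rfl⟩⟩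

end Aux

/-- For a compact metric space `X` and a completely metrizable `M`, the set of all
continuous maps `g : X → M` all of whose fibers are zero-dimensional is a Gδ subset
of `C(X,M)` with the uniform convergence topology. -/
theorem stmt3 {X M : Type*} [MetricSpace X] [CompactSpace X]
    [MetricSpace M] [CompleteSpace M] :
    IsGδ {g : C(X, M) | ∀ y : M, DimLE0 ↥(⇑g ⁻¹' {y})} := by
  have heq : {g : C(X, M) | ∀ y : M, DimLE0 ↥(⇑g ⁻¹' {y})} =
      ⋂ n : ℕ, {g : C(X, M) | GoodCover g (1 / (n + 1))} := by
    ext g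
    simp only [Set.mem_iInter, Set.mem_setOf_eq]
    constructor
    · intro h n
      exact goodCover_of_dimLE0 h (by positivity)
    · intro h y
      exact dimLE0_of_goodCover h y
  rw [heq]
  exact IsGδ.iInter fun n => (goodCover_open _).isGδ
end

section
/- Let (M,ρ) be a complete metric space, G ⊂ C(X,M), and (U(i))_{i≥1} a sequence of open subsets of C(X,M) (with the uniform metric, X compact metric). Assume that for every g ∈ G, every i ≥ 1, and every η > 0 there exists gᵢ ∈ B_ρ(g,η) ∩ U(i) ∩ G which is η-homotopic to g. Then for every g ∈ G and ε > 0 there exists g' ∈ ⋂_{i≥1} U(i) and an ε-homotopy connecting g and g'. -/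
open ContinuousMap unitInterval

noncomputable def concatH {X M : Type*} [TopologicalSpace X] [TopologicalSpace M]
    (g : ℕ → C(X, M)) (H : ∀ n, ContinuousMap.Homotopy (g n) (g (n + 1))) :
    (m k : ℕ) → ContinuousMap.Homotopy (g k) (g (k + m))
  | 0, k => ContinuousMap.Homotopy.refl (g k)
  | m + 1, k => ((H k).trans (concatH g H m (k + 1))).cast rfl (congrArg g (by omega))


lemma concatH_zero_apply {X M : Type*} [TopologicalSpace X] [TopologicalSpace M]
    (g : ℕ → C(X, M)) (H : ∀ n, ContinuousMap.Homotopy (g n) (g (n + 1)))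
    (k : ℕ) (p : I × X) : concatH g H 0 k p = g k p.2 := rfl

lemma concatH_succ_apply {X M : Type*} [TopologicalSpace X] [TopologicalSpace M]
    (g : ℕ → C(X, M)) (H : ∀ n, ContinuousMap.Homotopy (g n) (g (n + 1)))
    (m k : ℕ) (p : I × X) :
    concatH g H (m + 1) k p = ((H k).trans (concatH g H m (k + 1))) p := rfl

section Est
variable {X M : Type*} [TopologicalSpace X] [MetricSpace M]
    (g : ℕ → C(X, M)) (η : ℕ → ℝ) (H : ∀ n, ContinuousMap.Homotopy (g n) (g (n + 1)))
    (hpos : ∀ n, 0 ≤ η n) (hq : ∀ n, η (n + 1) ≤ η n / 4)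
    (htr : ∀ n (t : I) x, dist (H n (t, x)) (g n x) ≤ η n)
    (hgg : ∀ n x, dist (g (n + 1) x) (g n x) ≤ η n)

include hpos hq htr hgg in
lemma concatH_dist_base : ∀ (m k : ℕ) (p : I × X),
    dist (concatH g H m k p) (g k p.2) ≤ 4 / 3 * η k := by
  intro m
  induction m with
  | zero =>
    intro k p
    simp only [concatH, ContinuousMap.Homotopy.refl_apply]
    rw [dist_self]
    nlinarith [hpos k]
  | succ m ih =>
    intro k p
    obtain ⟨t, x⟩ := p
    rw [concatH_succ_apply, ContinuousMap.Homotopy.trans_apply]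
    split_ifs with ht
    · exact (htr k _ x).trans (by nlinarith [hpos k])
    · calc dist (concatH g H m (k + 1) (_, x)) (g k x)
          ≤ dist (concatH g H m (k + 1) (_, x)) (g (k + 1) x) + dist (g (k + 1) x) (g k x) :=
            dist_triangle _ _ _
        _ ≤ 4 / 3 * η (k + 1) + η k := add_le_add (ih (k + 1) _) (hgg k x)
        _ ≤ 4 / 3 * η k := by nlinarith [hq k]

include hpos hq htr hgg in
lemma concatH_dist_succ : ∀ (m k : ℕ) (p : I × X),
    dist (concatH g H m k p) (concatH g H (m + 1) k p) ≤ 4 / 3 * η (k + m) := by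
  intro m
  induction m with
  | zero =>
    intro k p
    rw [concatH_zero_apply, dist_comm]
    simpa using concatH_dist_base g η H hpos hq htr hgg 1 k p
  | succ m ih =>
    intro k p
    obtain ⟨t, x⟩ := p
    rw [concatH_succ_apply, concatH_succ_apply, ContinuousMap.Homotopy.trans_apply,
      ContinuousMap.Homotopy.trans_apply]
    split_ifs with ht
    · rw [dist_self]; nlinarith [hpos (k + (m + 1))]
    · have := ih (k + 1) (⟨2 * t - 1, unitInterval.two_mul_sub_one_mem_iff.2
        ⟨(not_le.1 ht).le, t.2.2⟩⟩, x)
      exact this.trans_eq (by rw [show k + 1 + m = k + (m + 1) by omega])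

end Est

/-- Two maps `f, g : X → M` are `ε`-homotopic if there is a homotopy between them
all of whose tracks have diameter `< ε`. -/
def EHomotopic {X M : Type*} [TopologicalSpace X] [MetricSpace M]
    (f g : C(X, M)) (ε : ℝ) : Prop :=
  ∃ H : ContinuousMap.Homotopy f g,
    ∀ x : X, Metric.diam (Set.range fun t : unitInterval => H (t, x)) < ε

/-- Lemma 2.2: if each open set `U i` can be entered from `G` by arbitrarily small
homotopies, then each `g ∈ G` is `ε`-homotopic to some `g' ∈ ⋂ i, U i`. -/
theorem stmt4 {X M : Type*} [MetricSpace X] [CompactSpace X]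
    [MetricSpace M] [CompleteSpace M]
    (G : Set C(X, M)) (U : ℕ → Set C(X, M)) (hU : ∀ i, IsOpen (U i))
    (h : ∀ g ∈ G, ∀ i : ℕ, ∀ η : ℝ, 0 < η →
      ∃ gi : C(X, M), gi ∈ G ∧ gi ∈ U i ∧ (∀ x, dist (g x) (gi x) < η) ∧
        EHomotopic g gi η) :
    ∀ g ∈ G, ∀ ε : ℝ, 0 < ε →
      ∃ g' : C(X, M), g' ∈ ⋂ i, U i ∧ EHomotopic g g' ε := by
  intro g hg ε hε
  have key : ∀ (n : ℕ) (p : {q : C(X, M) × ℝ // q.1 ∈ G ∧ 0 < q.2}),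
      ∃ q : {q : C(X, M) × ℝ // q.1 ∈ G ∧ 0 < q.2},
        q.1.1 ∈ U n ∧ q.1.2 ≤ p.1.2 / 4 ∧ Metric.ball q.1.1 (2 * q.1.2) ⊆ U n ∧
        (∀ x, dist (p.1.1 x) (q.1.1 x) < p.1.2) ∧ EHomotopic p.1.1 q.1.1 p.1.2 := by
    rintro n ⟨⟨p, e⟩, hpG, hepos⟩
    obtain ⟨q, hqG, hqU, hdq, hhq⟩ := h p hpG n e hepos
    obtain ⟨r, hr, hballr⟩ := Metric.isOpen_iff.1 (hU n) q hqU
    refine ⟨⟨(q, min (e / 4) (r / 2)), hqG, by positivity⟩, hqU, min_le_left _ _,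
      ?_, hdq, hhq⟩
    refine (Metric.ball_subset_ball ?_).trans hballr
    have := min_le_right (e / 4) (r / 2)
    linarith
  choose step hstep1 hstep2 hstep3 hstep4 hstep5 using key
  set S : ℕ → {q : C(X, M) × ℝ // q.1 ∈ G ∧ 0 < q.2} :=
    fun n => Nat.rec ⟨(g, ε / 8), hg, by positivity⟩ (fun n s => step n s) n with hS
  set gs : ℕ → C(X, M) := fun n => (S n).1.1 with hgs
  set ηs : ℕ → ℝ := fun n => (S n).1.2 with hηs
  have hg0 : gs 0 = g := rfl
  have hη0 : ηs 0 = ε / 8 := rfl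
  have hpos : ∀ n, 0 < ηs n := fun n => (S n).2.2
  have hq : ∀ n, ηs (n + 1) ≤ ηs n / 4 := fun n => hstep2 n (S n)
  have hballU : ∀ n, Metric.ball (gs (n + 1)) (2 * ηs (n + 1)) ⊆ U n :=
    fun n => hstep3 n (S n)
  have hdistgs : ∀ n x, dist (gs n x) (gs (n + 1) x) < ηs n := fun n => hstep4 n (S n)
  have hhom : ∀ n, EHomotopic (gs n) (gs (n + 1)) (ηs n) := fun n => hstep5 n (S n)
  choose H hH using hhom
  have htr : ∀ n (t : I) (x : X), dist (H n (t, x)) (gs n x) ≤ ηs n := by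
    intro n t x
    have hc : Continuous fun t : I => H n (t, x) :=
      (H n).continuous.comp (continuous_id.prodMk continuous_const)
    have hb := (isCompact_range hc).isBounded
    have h1 : H n (t, x) ∈ Set.range fun t : I => H n (t, x) := ⟨t, rfl⟩
    have h2 : gs n x ∈ Set.range fun t : I => H n (t, x) := ⟨0, (H n).apply_zero x⟩
    exact (Metric.dist_le_diam_of_mem hb h1 h2).trans (hH n x).le
  have hgg : ∀ n x, dist (gs (n + 1) x) (gs n x) ≤ ηs n := by
    intro n x; rw [dist_comm]; exact (hdistgs n x).le
  have hgeo : ∀ n, ηs n ≤ ε / 8 * (1 / 4) ^ n := by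
    intro n
    induction n with
    | zero => simp [hη0]
    | succ n ih =>
      have := hq n
      rw [pow_succ]
      nlinarith [hpos n]
  set F : ℕ → C(I × X, M) := fun n => (concatH gs H n 0).toContinuousMap with hF
  have hFd : ∀ n, dist (F n) (F (n + 1)) ≤ (4 / 3 * (ε / 8)) * (1 / 4) ^ n := by
    intro n
    rw [ContinuousMap.dist_le (by positivity)]
    intro p
    have h1 := concatH_dist_succ gs ηs H (fun n => (hpos n).le) hq htr hgg n 0 p
    have h2 : ηs (0 + n) ≤ ε / 8 * (1 / 4) ^ n := by rw [Nat.zero_add]; exact hgeo n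
    calc dist (F n p) (F (n + 1) p) ≤ 4 / 3 * ηs (0 + n) := h1
      _ ≤ (4 / 3 * (ε / 8)) * (1 / 4) ^ n := by nlinarith [pow_pos (by norm_num : (0:ℝ) < 1/4) n]
  obtain ⟨Fl, hFl⟩ := cauchySeq_tendsto_of_complete
    (cauchySeq_of_le_geometric (1 / 4) (4 / 3 * (ε / 8)) (by norm_num) hFd)
  have hpt : ∀ p : I × X, Filter.Tendsto (fun n => F n p) Filter.atTop (nhds (Fl p)) :=
    fun p => ((continuous_eval_const p).tendsto Fl).comp hFl
  set g' : C(X, M) := Fl.comp ⟨fun x => ((1 : I), x), continuous_const.prodMk continuous_id⟩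
    with hg'
  have hFone : ∀ n x, F n ((1 : I), x) = gs n x := by
    intro n x
    show concatH gs H n 0 ((1 : I), x) = gs n x
    rw [(concatH gs H n 0).apply_one x, Nat.zero_add]
  have hg'lim : ∀ x, Filter.Tendsto (fun n => gs n x) Filter.atTop (nhds (g' x)) := by
    intro x
    exact Filter.Tendsto.congr (fun n => hFone n x) (hpt ((1 : I), x))
  have hgk : ∀ m k (x : X), dist (gs (k + m) x) (gs k x) ≤ 4 / 3 * ηs k := by
    intro m
    induction m with
    | zero => intro k x; rw [Nat.add_zero, dist_self]; nlinarith [hpos k]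
    | succ m ih =>
      intro k x
      calc dist (gs (k + (m + 1)) x) (gs k x)
          ≤ dist (gs (k + 1 + m) x) (gs (k + 1) x) + dist (gs (k + 1) x) (gs k x) := by
            rw [show k + (m + 1) = k + 1 + m by omega]; exact dist_triangle _ _ _
        _ ≤ 4 / 3 * ηs (k + 1) + ηs k := add_le_add (ih (k + 1) x) (hgg k x)
        _ ≤ 4 / 3 * ηs k := by nlinarith [hq k]
  have hmem : ∀ i, g' ∈ U i := by
    intro i
    apply hballU i
    rw [Metric.mem_ball]
    have hle : dist g' (gs (i + 1)) ≤ 4 / 3 * ηs (i + 1) := by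
      rw [ContinuousMap.dist_le (by nlinarith [hpos (i + 1)])]
      intro x
      have htend : Filter.Tendsto (fun n => dist (gs n x) (gs (i + 1) x)) Filter.atTop
          (nhds (dist (g' x) (gs (i + 1) x))) := (hg'lim x).dist tendsto_const_nhds
      refine le_of_tendsto htend ?_
      filter_upwards [Filter.eventually_ge_atTop (i + 1)] with n hn
      have he : gs n = gs ((i + 1) + (n - (i + 1))) := by rw [Nat.add_sub_cancel' hn]
      rw [he]
      exact hgk (n - (i + 1)) (i + 1) x
    nlinarith [hpos (i + 1)]
  have hFlg : ∀ (t : I) (x : X), dist (Fl (t, x)) (g x) ≤ 4 / 3 * (ε / 8) := by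
    intro t x
    have htend : Filter.Tendsto (fun n => dist (F n (t, x)) (g x)) Filter.atTop
        (nhds (dist (Fl (t, x)) (g x))) := (hpt (t, x)).dist tendsto_const_nhds
    refine le_of_tendsto htend (Filter.Eventually.of_forall fun n => ?_)
    have h1 := concatH_dist_base gs ηs H (fun n => (hpos n).le) hq htr hgg n 0 (t, x)
    calc dist (F n (t, x)) (g x) = dist (concatH gs H n 0 (t, x)) (gs 0 x) := rfl
      _ ≤ 4 / 3 * ηs 0 := h1
      _ = 4 / 3 * (ε / 8) := by rw [hη0]
  have hmapzero : ∀ x, Fl ((0 : I), x) = g x := by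
    intro x
    have hconst : (fun n => F n ((0 : I), x)) = fun _ => g x :=
      funext fun n => (concatH gs H n 0).apply_zero x
    have : Filter.Tendsto (fun n => F n ((0 : I), x)) Filter.atTop (nhds (g x)) := by
      rw [hconst]; exact tendsto_const_nhds
    exact tendsto_nhds_unique (hpt ((0 : I), x)) this
  refine ⟨g', Set.mem_iInter.2 hmem, ⟨⟨Fl, hmapzero, fun x => rfl⟩, ?_⟩⟩
  intro x
  have hd : Metric.diam (Set.range fun t : I => Fl (t, x)) ≤ ε / 3 := by
    refine Metric.diam_le_of_forall_dist_le (by positivity) ?_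
    rintro p ⟨t, rfl⟩ q ⟨s, rfl⟩
    calc dist (Fl (t, x)) (Fl (s, x))
        ≤ dist (Fl (t, x)) (g x) + dist (g x) (Fl (s, x)) := dist_triangle _ _ _
      _ ≤ 4 / 3 * (ε / 8) + 4 / 3 * (ε / 8) :=
          add_le_add (hFlg t x) (by rw [dist_comm]; exact hFlg s x)
      _ = ε / 3 := by ring
  calc Metric.diam (Set.range fun t : I => Fl (t, x)) ≤ ε / 3 := hd
    _ < ε := by linarith
end

section
/- Let X be a compact metric space, Z ⊂ X an Fσ-set written Z = ⋃ᵢ Zᵢ with each Zᵢ closed in X, and M a metric space. For ε > 0 and i ≥ 1, the set H(Zᵢ,ε) = { g ∈ C(X,M) : no connected component of a fiber of g of diameter ≥ ε meets Zᵢ } is open in C(X,M) with the uniform convergence topology. -/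
/-!
The complement of the set is the projection to `C(X, M)` of the set of triples `(g, x, K)`
with `x ∈ Zᵢ ∩ K`, `K` a nonempty compact preconnected subset of the fiber `g⁻¹(g x)` and
`ε ≤ diam K`: such a `K` lies in the component of `x` in its fiber, and that component, being
closed, is itself such a `K`. Each of these conditions is closed in `C(X, M) × X × 𝒦(X)`, where
`𝒦(X)` is the space of nonempty compact sets with the Vietoris topology, and the projection
along the compact factor `X × 𝒦(X)` is a closed map.
-/

open Set Metric TopologicalSpace

theorem IsClosed.connectedComponentIn {X : Type*} [TopologicalSpace X] {F : Set X}
    (hF : IsClosed F) (x : X) : IsClosed (connectedComponentIn F x) := by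
  by_cases hx : x ∈ F
  · rw [connectedComponentIn_eq_image hx]
    exact hF.isClosedEmbedding_subtypeVal.isClosedMap _ isClosed_connectedComponent
  · rw [connectedComponentIn_eq_empty hx]
    exact isClosed_empty

theorem le_diam_connectedComponentIn_iff {X : Type*} [PseudoMetricSpace X] [CompactSpace X]
    {F : Set X} (hF : IsClosed F) {x : X} (hx : x ∈ F) (ε : ℝ) :
    ε ≤ diam (connectedComponentIn F x) ↔ ∃ K : NonemptyCompacts X,
      x ∈ K ∧ IsPreconnected (K : Set X) ∧ (K : Set X) ⊆ F ∧ ε ≤ diam (K : Set X) := by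
  constructor
  · intro h
    exact ⟨⟨⟨_, (hF.connectedComponentIn x).isCompact⟩, ⟨x, mem_connectedComponentIn hx⟩⟩,
      mem_connectedComponentIn hx, isPreconnected_connectedComponentIn,
      connectedComponentIn_subset F x, h⟩
  · rintro ⟨K, hxK, hK, hKF, hεK⟩
    exact hεK.trans <| diam_mono (hK.subset_connectedComponentIn hxK hKF) isBounded_of_compactSpace

namespace TopologicalSpace.NonemptyCompacts

variable {X : Type*} [TopologicalSpace X]

theorem isClosed_setOf_mem [T2Space X] :
    IsClosed {p : X × NonemptyCompacts X | p.1 ∈ p.2} := by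
  rw [← isOpen_compl_iff]
  convert (isOpen_setOfPred_disjoint_coe (α := X)).preimage
    (continuous_singleton.prodMap continuous_id) using 1
  ext ⟨x, K⟩
  simp

theorem isClosed_setOf_isPreconnected [T2Space X] :
    IsClosed {K : NonemptyCompacts X | IsPreconnected (K : Set X)} := by
  rw [← isOpen_compl_iff, isOpen_iff_forall_mem_open]
  intro K hK
  obtain ⟨u, v, hu, hv, hKuv, huv, hKu, hKv⟩ : ∃ u v : Set X, IsClosed u ∧ IsClosed v ∧
      (K : Set X) ⊆ u ∪ v ∧ (K : Set X) ∩ (u ∩ v) = ∅ ∧ ¬(K : Set X) ⊆ u ∧ ¬(K : Set X) ⊆ v := by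
    simpa [isPreconnected_iff_subset_of_disjoint_closed] using hK
  obtain ⟨U, V, hU, hV, hKU, hKV, hUV⟩ := SeparatedNhds.of_isCompact_isCompact
    (K.isCompact.inter_right hu) (K.isCompact.inter_right hv)
    (disjoint_left.2 fun y ⟨hyK, hyu⟩ ⟨_, hyv⟩ =>
      eq_empty_iff_forall_notMem.1 huv y ⟨hyK, hyu, hyv⟩)
  refine ⟨{L | (L : Set X) ⊆ U ∪ V} ∩ {L | ((L : Set X) ∩ U).Nonempty} ∩
      {L | ((L : Set X) ∩ V).Nonempty}, ?_, ?_, ?_⟩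
  · rintro L ⟨⟨hLUV, hLU⟩, hLV⟩ hL
    obtain ⟨y, -, hyU, hyV⟩ := hL U V hU hV hLUV hLU hLV
    exact hUV.ne_of_mem hyU hyV rfl
  · exact ((isOpen_subsets_of_isOpen (hU.union hV)).inter
      (isOpen_inter_nonempty_of_isOpen hU)).inter (isOpen_inter_nonempty_of_isOpen hV)
  · obtain ⟨y, hyK, hyu⟩ := not_subset.1 hKv
    obtain ⟨z, hzK, hzv⟩ := not_subset.1 hKu
    refine ⟨⟨fun w hw => ?_, y, hyK, hKU ⟨hyK, (hKuv hyK).resolve_right hyu⟩⟩,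
      z, hzK, hKV ⟨hzK, (hKuv hzK).resolve_left hzv⟩⟩
    rcases hKuv hw with h | h
    exacts [Or.inl (hKU ⟨hw, h⟩), Or.inr (hKV ⟨hw, h⟩)]

theorem isClosed_setOf_le_diam {X : Type*} [PseudoMetricSpace X] (ε : ℝ) :
    IsClosed {K : NonemptyCompacts X | ε ≤ diam (K : Set X)} := by
  rw [← isOpen_compl_iff, isOpen_iff_forall_mem_open]
  intro K hK
  simp only [mem_compl_iff, mem_ofPred_eq, not_le] at hK
  obtain ⟨δ, hδ, hδε⟩ : ∃ δ > 0, diam (K : Set X) + 2 * δ < ε :=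
    ⟨(ε - diam (K : Set X)) / 4, by linarith, by linarith⟩
  refine ⟨{L | (L : Set X) ⊆ thickening δ K}, fun L hL => ?_,
    isOpen_subsets_of_isOpen isOpen_thickening, self_subset_thickening hδ _⟩
  simp only [mem_compl_iff, mem_ofPred_eq, not_le]
  calc diam (L : Set X) ≤ diam (thickening δ (K : Set X)) :=
        diam_mono hL K.isCompact.isBounded.thickening
    _ ≤ diam (K : Set X) + 2 * δ := diam_thickening_le _ hδ.le
    _ < ε := hδε

end TopologicalSpace.NonemptyCompacts

theorem ContinuousMap.isClosed_setOf_subset_fiber {X M : Type*} [TopologicalSpace X]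
    [LocallyCompactSpace X] [TopologicalSpace M] [T2Space M] :
    IsClosed {p : C(X, M) × X × NonemptyCompacts X | (p.2.2 : Set X) ⊆ p.1 ⁻¹' {p.1 p.2.1}} := by
  convert isClosed_eq (f := fun p : C(X, M) × X × NonemptyCompacts X =>
    p.2.2.map p.1 p.1.continuous) (g := fun p => {p.1 p.2.1}) (by fun_prop) (by fun_prop) using 1
  ext p
  rw [mem_ofPred_eq, mem_ofPred_eq, ← SetLike.coe_set_eq, NonemptyCompacts.coe_map,
    NonemptyCompacts.coe_singleton, ← image_subset_iff,
    (p.2.2.nonempty.image _).subset_singleton_iff]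

theorem stmt5_general {X M : Type*} [MetricSpace X] [CompactSpace X] [MetricSpace M]
    (Zi : Set X) (hZi : IsClosed Zi) (ε : ℝ) :
    IsOpen {g : C(X, M) |
      ∀ x ∈ Zi, Metric.diam (connectedComponentIn (⇑g ⁻¹' {g x}) x) < ε} := by
  let bad : Set (C(X, M) × X × NonemptyCompacts X) :=
    {p | p.2.1 ∈ Zi ∧ p.2.1 ∈ p.2.2 ∧ IsPreconnected (p.2.2 : Set X) ∧
      (p.2.2 : Set X) ⊆ p.1 ⁻¹' {p.1 p.2.1} ∧ ε ≤ diam (p.2.2 : Set X)}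
  have hbad : IsClosed bad :=
    (hZi.preimage (by fun_prop)).inter <|
      (NonemptyCompacts.isClosed_setOf_mem.preimage (by fun_prop)).inter <|
      (NonemptyCompacts.isClosed_setOf_isPreconnected.preimage (by fun_prop)).inter <|
      ContinuousMap.isClosed_setOf_subset_fiber.inter <|
      (NonemptyCompacts.isClosed_setOf_le_diam ε).preimage (by fun_prop)
  have hcompl : {g : C(X, M) | ∀ x ∈ Zi,
      Metric.diam (connectedComponentIn (⇑g ⁻¹' {g x}) x) < ε}ᶜ = Prod.fst '' bad := by
    ext g
    simp only [mem_compl_iff, mem_ofPred_eq, not_forall, not_lt, exists_prop,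
      le_diam_connectedComponentIn_iff (isClosed_singleton.preimage g.continuous) rfl]
    constructor
    · rintro ⟨x, hx, K, hK⟩
      exact ⟨(g, x, K), ⟨hx, hK⟩, rfl⟩
    · rintro ⟨⟨_, x, K⟩, ⟨hx, hK⟩, rfl⟩
      exact ⟨x, hx, K, hK⟩
  rw [← isClosed_compl_iff, hcompl]
  exact isClosedMap_fst_of_compactSpace _ hbad

/-- For a compact metric space `X`, a metric space `M`, a closed set `Zᵢ ⊆ X` and
`ε > 0`, the set `H(Zᵢ,ε)` of maps `g : X → M` such that no connected component of a
fiber of `g` of diameter `≥ ε` meets `Zᵢ` is open in `C(X,M)` with the uniform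
convergence topology.  (A component of a fiber meets `Zᵢ` iff it is the component in
the fiber of some point `x ∈ Zᵢ`.) -/
theorem stmt5 {X M : Type*} [MetricSpace X] [CompactSpace X] [MetricSpace M]
    (Zi : Set X) (hZi : IsClosed Zi) (ε : ℝ) (hε : 0 < ε) :
    IsOpen {g : C(X, M) |
      ∀ x ∈ Zi, Metric.diam (connectedComponentIn (⇑g ⁻¹' {g x}) x) < ε} :=
  stmt5_general Zi hZi ε
end

section
/- Every open subset of a metrizable space with the AP(n,0)-property also has the AP(n,0)-property. -/
/-- The `n`-dimensional cube `Iⁿ`. -/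
abbrev Cube (n : ℕ) := Fin n → unitInterval

/-- A map is zero-dimensional if all its fibers are zero-dimensional. -/
def ZeroDimFibers {X M : Type*} [TopologicalSpace X] [TopologicalSpace M]
    (g : X → M) : Prop :=
  ∀ y : M, DimLE0 ↥(g ⁻¹' {y})

/-- `M` has the `AP(n,0)`-property: every map `Iⁿ → M` is, for each `ε > 0`,
`ε`-homotopic to a map with zero-dimensional fibers. -/
def AP (M : Type*) [MetricSpace M] (n : ℕ) : Prop :=
  ∀ ε : ℝ, 0 < ε → ∀ g : C(Cube n, M),
    ∃ g' : C(Cube n, M), ZeroDimFibers ⇑g' ∧ EHomotopic g g' ε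

/-- Every open subset of a metric space with the `AP(n,0)`-property has the
`AP(n,0)`-property. -/
theorem stmt7 {M : Type*} [MetricSpace M] (n : ℕ) (hM : AP M n)
    (U : Set M) (hU : IsOpen U) : AP ↥U n := by
  intro ε hε g
  -- the map into M
  set f : C(Cube n, M) := ⟨fun x => (g x : M), continuous_subtype_val.comp g.continuous⟩ with hf
  have hK : IsCompact (Set.range f) := isCompact_range f.continuous
  have hKU : Set.range f ⊆ U := by
    rintro _ ⟨x, rfl⟩; exact (g x).2
  obtain ⟨δ, hδ, hth⟩ := hK.exists_thickening_subset_open hU hKU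
  set ε₀ := min ε δ with hε₀
  have hε₀pos : 0 < ε₀ := lt_min hε hδ
  obtain ⟨g', hzd, H, hH⟩ := hM ε₀ hε₀pos f
  -- every point of every track lies in U
  have hmem : ∀ (t : unitInterval) (x : Cube n), H (t, x) ∈ U := by
    intro t x
    apply hth
    rw [Metric.mem_thickening_iff]
    refine ⟨f x, ⟨x, rfl⟩, ?_⟩
    have hb : Bornology.IsBounded (Set.range fun t : unitInterval => H (t, x)) :=
      (isCompact_range (H.continuous.comp (by continuity))).isBounded
    have h1 : H (t, x) ∈ Set.range fun t : unitInterval => H (t, x) := ⟨t, rfl⟩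
    have h2 : f x ∈ Set.range fun t : unitInterval => H (t, x) := ⟨0, by simp⟩
    calc dist (H (t, x)) (f x) ≤ Metric.diam (Set.range fun t : unitInterval => H (t, x)) :=
          Metric.dist_le_diam_of_mem hb h1 h2
      _ < ε₀ := hH x
      _ ≤ δ := min_le_right _ _
  have hmem' : ∀ x : Cube n, g' x ∈ U := by
    intro x
    have := hmem 1 x
    simpa using this
  set g'' : C(Cube n, ↥U) := ⟨fun x => ⟨g' x, hmem' x⟩, g'.continuous.subtype_mk _⟩ with hg''
  refine ⟨g'', ?_, ?_⟩
  · intro y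
    have hset : (⇑g'' ⁻¹' {y}) = (⇑g' ⁻¹' {(y : M)}) := by
      ext x
      simp [hg'', Subtype.ext_iff]
    rw [hset]
    exact hzd y
  · let HU : ContinuousMap.Homotopy g g'' :=
      { toFun := fun p => ⟨H p, hmem p.1 p.2⟩
        continuous_toFun := H.continuous.subtype_mk _
        map_zero_left := fun x => Subtype.ext (by simp [hf])
        map_one_left := fun x => Subtype.ext (by simp [hg'']) }
    refine ⟨HU, ?_⟩
    intro x
    have heq : Metric.diam (Set.range fun t : unitInterval => HU (t, x)) =
        Metric.diam (Set.range fun t : unitInterval => H (t, x)) := by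
      rw [← isometry_subtype_coe.diam_image]
      congr 1
      ext z
      constructor
      · rintro ⟨_, ⟨t, rfl⟩, rfl⟩; exact ⟨t, rfl⟩
      · rintro ⟨t, rfl⟩; exact ⟨_, ⟨t, rfl⟩, rfl⟩
    calc Metric.diam (Set.range fun t : unitInterval => HU (t, x)) = _ := heq
      _ < ε₀ := hH x
      _ ≤ ε := min_le_left _ _
end

section
/- Let X be a completely metrizable space with the DD^{{0,0}}-property (for every ε > 0, any pair of points can be ε-homotopically perturbed to distinct points via paths of diameter < ε). Then X has the AP(1,0)-property: every continuous map g : I → X is, for every ε > 0, ε-homotopic to a continuous map g' : I → X all of whose fibers are zero-dimensional. -/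
/-!
A map `G : I → X` that is constant on no open interval has zero-dimensional fibers: every fiber
misses a dense set of points, so it has a basis of clopen sets cut out by intervals whose
endpoints lie outside it. Such a `G` is produced as the limit of a sequence of small
perturbations of `g`, one for each interval of a countable basis: if the current map is
constant on the interval, a short path from the `DD^{0,0}`-property is inserted there as a
bump; the two points witnessing non-constancy are then frozen by all later perturbations.
The perturbations are paths in the complete space `C(I, X)` of summable size, and their
infinite concatenation is the required homotopy.
-/

open Set Filter Topology Metric unitInterval

section Dimension

theorem DimLE0.of_forall_exists_isClopen {Y : Type*} [TopologicalSpace Y]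
    [SecondCountableTopology Y]
    (h : ∀ (y : Y) (U : Set Y), IsOpen U → y ∈ U → ∃ C, IsClopen C ∧ y ∈ C ∧ C ⊆ U) :
    DimLE0 Y := by
  intro ι U _ hUo hUcov
  rcases isEmpty_or_nonempty Y with hY | ⟨⟨y₀⟩⟩
  · exact ⟨fun _ => ∅, fun _ => isOpen_empty, fun _ => empty_subset _,
      fun _ _ _ => disjoint_empty _, Subsingleton.elim _ _⟩
  have hcov : ∀ y, ∃ i, y ∈ U i := fun y => mem_iUnion.1 (hUcov ▸ mem_univ y)
  choose i hi using hcov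
  choose C hCc hyC hCU using fun y => h y (U (i y)) (hUo _) (hi y)
  obtain ⟨T, hTc, hT⟩ := TopologicalSpace.isOpen_iUnion_countable C fun y => (hCc y).isOpen
  have hTcov : ∀ y, ∃ z ∈ T, y ∈ C z := fun y => by
    simpa [← hT] using mem_iUnion.2 ⟨y, hyC y⟩
  obtain ⟨e, rfl⟩ := hTc.exists_eq_range (let ⟨z, hz, _⟩ := hTcov y₀; ⟨z, hz⟩)
  let D := disjointed (C ∘ e)
  have hDo : ∀ n, IsOpen (D n) := fun n => by
    rw [show D n = _ from disjointed_eq_inf_compl _ n]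
    exact (hCc _).isOpen.inter <|
      (finite_Iio n).isOpen_biInter fun m _ => (hCc _).isClosed.isOpen_compl
  refine ⟨fun j => ⋃ n ∈ {n | i (e n) = j}, D n, fun j => isOpen_biUnion fun n _ => hDo n,
    fun j => iUnion₂_subset fun n hn => (disjointed_le _ n).trans (hn ▸ hCU _), ?_, ?_⟩
  · intro j k hjk
    simp only [Function.onFun, disjoint_iUnion_left, disjoint_iUnion_right]
    exact fun n hn m hm => disjoint_disjointed _ fun hnm => hjk (hn ▸ hm ▸ hnm ▸ rfl)
  · refine eq_univ_of_forall fun y => ?_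
    obtain ⟨n, hn⟩ : ∃ n, y ∈ D n := by
      obtain ⟨_, ⟨n, rfl⟩, hy⟩ := hTcov y
      simpa only [D, ← mem_iUnion, iUnion_disjointed] using mem_iUnion.2 ⟨n, hy⟩
    exact mem_iUnion₂.2 ⟨i (e n), n, mem_iUnion.2 ⟨rfl, hn⟩⟩

theorem exists_isClopen_subset_of_isEmbedding_real {Y : Type*} [TopologicalSpace Y]
    {v : Y → ℝ} (hv : IsEmbedding v) (hd : Dense (range v)ᶜ) {y : Y} {U : Set Y}
    (hU : IsOpen U) (hy : y ∈ U) : ∃ C, IsClopen C ∧ y ∈ C ∧ C ⊆ U := by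
  obtain ⟨V, hVo, rfl⟩ := hv.isOpen_iff.1 hU
  obtain ⟨ε, hε, hball⟩ := Metric.isOpen_iff.1 hVo (v y) hy
  obtain ⟨a, ha, haI⟩ := hd.exists_between (sub_lt_self (v y) hε)
  obtain ⟨b, hb, hbI⟩ := hd.exists_between (lt_add_of_pos_right (v y) hε)
  have hIoo : v ⁻¹' Ioo a b = v ⁻¹' Icc a b := by
    ext z
    exact ⟨fun h => Ioo_subset_Icc_self h, fun ⟨h₁, h₂⟩ =>
      ⟨h₁.lt_of_ne fun h => ha ⟨z, h.symm⟩, h₂.lt_of_ne fun h => hb ⟨z, h⟩⟩⟩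
  refine ⟨v ⁻¹' Ioo a b, ⟨hIoo ▸ isClosed_Icc.preimage hv.continuous,
    isOpen_Ioo.preimage hv.continuous⟩, ⟨haI.2, hbI.1⟩, preimage_mono ?_⟩
  rw [Real.ball_eq_Ioo] at hball
  exact (Ioo_subset_Ioo haI.1.le hbI.2.le).trans hball

theorem dense_compl_image_coe_of_forall_exists_notMem {S : Set I}
    (hS : ∀ x y : I, x < y → ∃ z ∈ Ioo x y, z ∉ S) : Dense ((↑) '' S : Set ℝ)ᶜ := by
  have hout : ∀ c : ℝ, c ∉ Icc 0 1 → c ∈ ((↑) '' S : Set ℝ)ᶜ :=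
    fun c hc ⟨s, _, hs⟩ => hc (hs ▸ s.2)
  refine dense_of_exists_between fun a b hab => ?_
  rcases lt_or_ge a 0 with ha | ha
  · exact ⟨(a + min b 0) / 2, hout _ fun h => by linarith [h.1, min_le_right b 0],
      by linarith [lt_min hab ha], by linarith [min_le_left b 0, min_le_right b 0]⟩
  rcases lt_or_ge 1 b with hb | hb
  · exact ⟨(max a 1 + b) / 2, hout _ fun h => by linarith [h.2, le_max_right a 1],
      by linarith [le_max_left a 1, le_max_right a 1], by linarith [max_lt hab hb]⟩
  obtain ⟨z, hz, hzS⟩ := hS ⟨a, ha, hab.le.trans hb⟩ ⟨b, ha.trans hab.le, hb⟩ hab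
  exact ⟨z, fun ⟨s, hs, hsz⟩ => hzS (Subtype.ext hsz ▸ hs), hz⟩

theorem dimLE0_of_forall_exists_notMem (S : Set I)
    (hS : ∀ x y : I, x < y → ∃ z ∈ Ioo x y, z ∉ S) : DimLE0 S := by
  have hv : IsEmbedding fun s : S => ((s : I) : ℝ) :=
    IsEmbedding.subtypeVal.comp IsEmbedding.subtypeVal
  have hd : Dense (range fun s : S => ((s : I) : ℝ))ᶜ := by
    have : (range fun s : S => ((s : I) : ℝ)) = (↑) '' S := by ext; simp
    exact this ▸ dense_compl_image_coe_of_forall_exists_notMem hS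
  exact DimLE0.of_forall_exists_isClopen fun _ _ hU hy =>
    exists_isClopen_subset_of_isEmbedding_real hv hd hU hy

theorem zeroDimFibers_of_forall_exists_ne {X : Type*} [TopologicalSpace X] (G : I → X)
    (hG : ∀ x y : I, x < y → ∃ u ∈ Ioo x y, ∃ v ∈ Ioo x y, G u ≠ G v) : ZeroDimFibers G := by
  intro c
  refine dimLE0_of_forall_exists_notMem _ fun x y hxy => ?_
  obtain ⟨u, hu, v, hv, huv⟩ := hG x y hxy
  by_cases hc : G u = c
  · exact ⟨v, hv, fun hvc => huv (hc.trans (mem_singleton_iff.1 hvc).symm)⟩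
  · exact ⟨u, hu, hc⟩

end Dimension

section PathConcat

variable {Y : Type*} [MetricSpace Y]

theorem Path.dist_trans_apply_le {x y z z' : Y} (γ : Path x y) {α : Path y z} {β : Path y z'}
    {c : ℝ} (h : ∀ s, dist (α s) (β s) ≤ c) (t : I) :
    dist ((γ.trans α) t) ((γ.trans β) t) ≤ c := by
  rw [Path.trans_apply, Path.trans_apply]
  split_ifs
  · simpa using dist_nonneg.trans (h 0)
  · exact h _

/-- The concatenation `γ k ⬝ γ (k + 1) ⬝ ⋯ ⬝ γ (k + N - 1)`. -/
noncomputable def Path.concatRange {y : ℕ → Y} (γ : ∀ n, Path (y n) (y (n + 1))) :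
    (N k : ℕ) → Path (y k) (y (k + N))
  | 0, k => Path.refl (y k)
  | N + 1, k => ((γ k).trans (Path.concatRange γ N (k + 1))).cast rfl
      (congrArg y (Nat.add_right_comm k N 1))

theorem Path.dist_concatRange_succ_le {y : ℕ → Y} (γ : ∀ n, Path (y n) (y (n + 1)))
    {δ : ℕ → ℝ} (hγ : ∀ n t, dist (γ n t) (y n) ≤ δ n) (N k : ℕ) (t : I) :
    dist (Path.concatRange γ (N + 1) k t) (Path.concatRange γ N k t) ≤ δ (k + N) := by
  induction N generalizing k t with
  | zero =>
    change dist (((γ k).trans (Path.refl _)) t) (y k) ≤ δ k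
    obtain ⟨s, hs⟩ | hs := (Path.trans_range (γ k) (Path.refl _)).subset (mem_range_self t)
    · rw [← hs]; exact hγ k s
    · rw [Path.refl_range, mem_singleton_iff] at hs
      rw [hs, ← (γ k).target]; exact hγ k 1
  | succ N ih =>
    exact Path.dist_trans_apply_le (γ k)
      (fun s => (ih (k + 1) s).trans_eq (by rw [Nat.add_right_comm, add_assoc])) t

theorem exists_path_of_summable_dist [CompleteSpace Y] {y : ℕ → Y}
    (γ : ∀ n, Path (y n) (y (n + 1))) {δ : ℕ → ℝ} (hδ : Summable δ)
    (hγ : ∀ n t, dist (γ n t) (y n) ≤ δ n) :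
    ∃ z, Tendsto y atTop (𝓝 z) ∧ ∃ p : Path (y 0) z, ∀ t, dist (p t) (y 0) ≤ ∑' n, δ n := by
  have hδ₀ : ∀ n, 0 ≤ δ n := fun n => dist_nonneg.trans (hγ n 0)
  let f : ℕ → C(I, Y) := fun N => Path.concatRange γ N 0
  have hf : ∀ N, dist (f N) (f (N + 1)) ≤ δ N := fun N => by
    rw [dist_comm, ContinuousMap.dist_le (hδ₀ N)]
    exact fun t => (Path.dist_concatRange_succ_le γ hγ N 0 t).trans_eq (by rw [zero_add])
  obtain ⟨p, hp⟩ := cauchySeq_tendsto_of_complete (cauchySeq_of_dist_le_of_summable δ hf hδ)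
  have heval : ∀ t, Tendsto (fun N => f N t) atTop (𝓝 (p t)) := fun t =>
    ((continuous_eval_const t).tendsto p).comp hp
  have hp₀ : y 0 = p 0 := by simpa [f] using heval 0
  refine ⟨p 1, by simpa [f] using heval 1, ⟨p, hp₀.symm, rfl⟩, fun t => ?_⟩
  refine le_of_tendsto ((heval t).dist tendsto_const_nhds) (Eventually.of_forall fun N => ?_)
  calc dist (f N t) (y 0) = dist (f 0 t) (f N t) := dist_comm _ _
    _ ≤ dist (f 0) (f N) := ContinuousMap.dist_apply_le_dist t
    _ ≤ ∑ n ∈ Finset.range N, dist (f n) (f (n + 1)) := dist_le_range_sum_dist f N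
    _ ≤ ∑ n ∈ Finset.range N, δ n := Finset.sum_le_sum fun n _ => hf n
    _ ≤ ∑' n, δ n := hδ.sum_le_tsum _ fun n _ => hδ₀ n

end PathConcat

section Homotopies

variable {X : Type*} [MetricSpace X]

def Path.toHomotopy {f g : C(I, X)} (P : Path f g) : f.Homotopy g where
  toFun q := P q.1 q.2
  continuous_toFun := continuous_eval.comp (P.continuous.prodMap continuous_id)
  map_zero_left x := by simp
  map_one_left x := by simp

theorem ehomotopic_of_path {f g : C(I, X)} (P : Path f g) {c ε : ℝ}
    (hP : ∀ t, dist (P t) f ≤ c) (hc : 2 * c < ε) : EHomotopic f g ε := by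
  refine ⟨P.toHomotopy, fun x => (diam_le_of_forall_dist_le ?_ ?_).trans_lt hc⟩
  · linarith [dist_nonneg.trans (hP 0)]
  rintro _ ⟨s, rfl⟩ _ ⟨t, rfl⟩
  calc dist (P s x) (P t x) ≤ dist (P s x) (f x) + dist (P t x) (f x) :=
        dist_triangle_right _ _ _
    _ ≤ c + c := add_le_add ((ContinuousMap.dist_apply_le_dist x).trans (hP s))
        ((ContinuousMap.dist_apply_le_dist x).trans (hP t))
    _ = 2 * c := (two_mul c).symm

theorem exists_path_bump (g : C(I, X)) {m : I} {r : ℝ} (hr : 0 < r) {c c' : X}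
    (hg : ∀ x, dist x m ≤ r → g x = c) (p : Path c c') {η : ℝ} (hp : ∀ s, dist (p s) c ≤ η) :
    ∃ g₁ : C(I, X), g₁ m = c' ∧ (∀ x, r ≤ dist x m → g₁ x = g x) ∧
      ∃ P : Path g g₁, ∀ t, dist (P t) g ≤ η := by
  let H : I × I → X := fun q =>
    if dist q.2 m ≤ r then p.extend (q.1 * (1 - dist q.2 m / r)) else g q.2
  have hH : Continuous H := by
    refine Continuous.if_le (by fun_prop) (by fun_prop) (by fun_prop) continuous_const
      fun q hq => ?_
    simp [hq, hr.ne', hg _ hq.le]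
  let Hc : C(I × I, X) := ⟨H, hH⟩
  have hH₀ : Hc.curry 0 = g := by
    ext x
    by_cases hx : dist x m ≤ r <;> simp [Hc, H, hx, hg]
  refine ⟨Hc.curry 1, by simp [Hc, H, hr.le], fun x hx => ?_, ⟨Hc.curry, hH₀, rfl⟩, fun t => ?_⟩
  · rcases hx.lt_or_eq with hx | hx
    · simp [Hc, H, not_le.2 hx]
    · simp [Hc, H, ← hx, hr.ne', hg x hx.ge]
  · rw [ContinuousMap.dist_le (dist_nonneg.trans (hp 0))]
    intro x
    change dist (H (t, x)) (g x) ≤ η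
    by_cases hx : dist x m ≤ r
    · obtain ⟨s, hs⟩ :=
        (Path.extend_range p).le (mem_range_self (f := p.extend) (t * (1 - dist x m / r)))
      simpa [H, hx, hg x hx, ← hs] using hp s
    · simpa [H, hx] using dist_nonneg.trans (hp 0)

end Homotopies

def HasDD00 (X : Type*) [MetricSpace X] : Prop :=
  ∀ ε : ℝ, 0 < ε → ∀ f g : X, ∃ f' g' : X, f' ≠ g' ∧
    (∃ p : Path f f', diam (range p) < ε) ∧ (∃ q : Path g g', diam (range q) < ε)

theorem HasDD00.exists_path_ne {X : Type*} [MetricSpace X] (h : HasDD00 X) (c : X) {η : ℝ}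
    (hη : 0 < η) : ∃ c' ≠ c, ∃ p : Path c c', ∀ s, dist (p s) c ≤ η := by
  have bound : ∀ {c'} (p : Path c c'), diam (range p) < η → ∀ s, dist (p s) c ≤ η :=
    fun p hp s => by
      simpa using (dist_le_diam_of_mem (isCompact_range p.continuous).isBounded
        (mem_range_self s) (mem_range_self 0)).trans hp.le
  obtain ⟨c₁, c₂, hne, ⟨p, hp⟩, ⟨q, hq⟩⟩ := h η hη c c
  by_cases h₁ : c₁ = c
  · exact ⟨c₂, fun h₂ => hne (h₁.trans h₂.symm), q, bound q hq⟩
  · exact ⟨c₁, h₁, p, bound p hp⟩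

theorem exists_seq_Ioo_subset (α : Type*) [TopologicalSpace α] [LinearOrder α] [OrderTopology α]
    [DenselyOrdered α] [TopologicalSpace.SeparableSpace α] [Nontrivial α] :
    ∃ e : ℕ → α × α, (∀ n, (e n).1 < (e n).2) ∧
      ∀ x y : α, x < y → ∃ n, Ioo (e n).1 (e n).2 ⊆ Ioo x y := by
  obtain ⟨D, hDc, hD⟩ := TopologicalSpace.exists_countable_dense α
  let Q : Set (α × α) := D ×ˢ D ∩ {q | q.1 < q.2}
  have hQ : ∀ x y : α, x < y → ∃ q ∈ Q, Ioo q.1 q.2 ⊆ Ioo x y := fun x y hxy => by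
    obtain ⟨a, haD, hxa, hay⟩ := hD.exists_between hxy
    obtain ⟨b, hbD, hab, hby⟩ := hD.exists_between hay
    exact ⟨(a, b), ⟨⟨haD, hbD⟩, hab⟩, Ioo_subset_Ioo hxa.le hby.le⟩
  obtain ⟨x, y, hxy⟩ := exists_pair_lt α
  obtain ⟨e, he⟩ : ∃ e : ℕ → α × α, Q = range e :=
    ((hDc.prod hDc).mono inter_subset_left).exists_eq_range
      (let ⟨q, hq, _⟩ := hQ x y hxy; ⟨q, hq⟩)
  refine ⟨e, fun n => ?_, fun x y hxy => ?_⟩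
  · exact (show e n ∈ Q from he ▸ mem_range_self n).2
  · obtain ⟨q, hq, hqxy⟩ := hQ x y hxy
    rw [he] at hq
    obtain ⟨n, rfl⟩ := hq
    exact ⟨n, hqxy⟩

section Perturbation

variable {X : Type*} [MetricSpace X]
  (hmove : ∀ (c : X) (η : ℝ), 0 < η → ∃ c' ≠ c, ∃ p : Path c c', ∀ s, dist (p s) c ≤ η)
include hmove

theorem exists_path_separating (g : C(I, X)) (F : Finset I) {a b : I} (hab : a < b) {η : ℝ}
    (hη : 0 < η) :
    ∃ g₁ : C(I, X), (∃ u ∈ Ioo a b, ∃ v ∈ Ioo a b, g₁ u ≠ g₁ v) ∧ (∀ w ∈ F, g₁ w = g w) ∧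
      ∃ P : Path g g₁, ∀ t, dist (P t) g ≤ η := by
  by_cases hsep : ∃ u ∈ Ioo a b, ∃ v ∈ Ioo a b, g u ≠ g v
  · exact ⟨g, hsep, fun _ _ => rfl, Path.refl g, fun _ => by simpa using hη.le⟩
  push Not at hsep
  obtain ⟨m, hm, hmF⟩ := ((Ioo_infinite hab).sdiff F.finite_toSet).nonempty
  obtain ⟨v, hv, hvm⟩ := ((Ioo_infinite hab).sdiff (finite_singleton m)).nonempty
  obtain ⟨ε, hε, hball⟩ :=
    Metric.isOpen_iff.1 (isOpen_Ioo.sdiff F.finite_toSet.isClosed) m ⟨hm, hmF⟩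
  have hr : 0 < min (ε / 2) (dist v m) := lt_min (half_pos hε) (dist_pos.2 hvm)
  have hconst : ∀ x, dist x m ≤ min (ε / 2) (dist v m) → g x = g m := fun x hx =>
    hsep x (hball (mem_ball.2 (by linarith [min_le_left (ε / 2) (dist v m)]))).1 m hm
  obtain ⟨c', hc', p, hp⟩ := hmove (g m) η hη
  obtain ⟨g₁, hg₁m, hg₁, P, hP⟩ := exists_path_bump g hr hconst p hp
  refine ⟨g₁, ⟨m, hm, v, hv, ?_⟩, fun w hw => hg₁ w ?_, P, hP⟩
  · rw [hg₁m, hg₁ v (min_le_right _ _), hsep v hv m hm]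
    exact hc'
  · by_contra! hw'
    exact (hball (mem_ball.2 (hw'.trans_le (min_le_left _ _) |>.trans (half_lt_self hε)))).2 hw

theorem exists_path_to_nowhere_locally_constant [CompleteSpace X] (g : C(I, X))
    {δ : ℕ → ℝ} (hδ : ∀ n, 0 < δ n) (hs : Summable δ) :
    ∃ G : C(I, X), (∀ x y : I, x < y → ∃ u ∈ Ioo x y, ∃ v ∈ Ioo x y, G u ≠ G v) ∧
      ∃ P : Path g G, ∀ t, dist (P t) g ≤ ∑' n, δ n := by
  obtain ⟨e, he, he_dense⟩ := exists_seq_Ioo_subset I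
  choose next hsep hfix P hP using fun (s : C(I, X) × Finset I) (n : ℕ) =>
    exists_path_separating hmove s.1 s.2 (he n) (hδ n)
  choose u hu v hv hne using hsep
  -- the state is the current map together with the finite set of points it must keep fixed
  let s : ℕ → C(I, X) × Finset I := fun n => Nat.rec (g, ∅)
    (fun k sk => (next sk k, insert (u sk k) (insert (v sk k) sk.2))) n
  have hs_succ : ∀ n, s (n + 1) =
      (next (s n) n, insert (u (s n) n) (insert (v (s n) n) (s n).2)) := fun _ => rfl
  have hmono : Monotone fun n => (s n).2 := monotone_nat_of_le_succ fun n => by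
    rw [hs_succ]
    exact (Finset.subset_insert _ _).trans (Finset.subset_insert _ _)
  have hstable : ∀ n m, n ≤ m → ∀ w ∈ (s n).2, (s m).1 w = (s n).1 w := by
    intro n m hnm w hw
    induction m, hnm using Nat.le_induction with
    | base => rfl
    | succ m hnm ih => exact (hfix _ _ w (hmono hnm hw)).trans ih
  obtain ⟨G, hG, Q, hQ⟩ :=
    exists_path_of_summable_dist (y := fun n => (s n).1) (fun n => P (s n) n) hs
      fun n => hP (s n) n
  have hlim : ∀ n, ∀ w ∈ (s n).2, G w = (s n).1 w := fun n w hw =>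
    tendsto_nhds_unique (((continuous_eval_const w).tendsto G).comp hG)
      (tendsto_const_nhds.congr' <|
        eventually_atTop.2 ⟨n, fun m hm => (hstable n m hm w hw).symm⟩)
  refine ⟨G, fun x y hxy => ?_, Q, hQ⟩
  obtain ⟨n, hn⟩ := he_dense x y hxy
  refine ⟨u (s n) n, hn (hu _ _), v (s n) n, hn (hv _ _), ?_⟩
  rw [hlim (n + 1) _ (by simp [hs_succ]), hlim (n + 1) _ (by simp [hs_succ])]
  exact hne _ _

end Perturbation

/-- If a completely metrizable space `X` has the (metric) `DD^{0,0}`-property —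
for every `ε > 0` any two points can be moved, along paths of diameter `< ε`, to a
pair of distinct points — then every map `g : I → X` is, for every `ε > 0`,
`ε`-homotopic to a map with zero-dimensional fibers (the `AP(1,0)`-property). -/
theorem stmt12 {X : Type*} [MetricSpace X] [CompleteSpace X]
    (h : ∀ ε : ℝ, 0 < ε → ∀ f g : X, ∃ f' g' : X, f' ≠ g' ∧
      (∃ p : Path f f', Metric.diam (Set.range p) < ε) ∧
      (∃ q : Path g g', Metric.diam (Set.range q) < ε)) :
    ∀ ε : ℝ, 0 < ε → ∀ g : C(unitInterval, X),
      ∃ g' : C(unitInterval, X), ZeroDimFibers ⇑g' ∧ EHomotopic g g' ε := by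
  intro ε hε g
  obtain ⟨G, hG, P, hP⟩ := exists_path_to_nowhere_locally_constant
    (fun c _ hη => HasDD00.exists_path_ne h c hη) g (δ := fun n => ε / 4 / 2 / 2 ^ n)
    (fun n => by positivity) (summable_geometric_two' _)
  rw [tsum_geometric_two'] at hP
  exact ⟨G, zeroDimFibers_of_forall_exists_ne G hG, ehomotopic_of_path P hP (by linarith)⟩
end

section
/- If X is a metrizable space with the AP(n,0)-property and Y is a metrizable space with the ∞-DD^{{0,0}}-property (i.e., for every open cover and maps f_X, f_Y : K → X, K → Y defined on a compactum K, f_Y can be approximated by maps injective on the fibers of a given zero-dimensional map), then X × Y has the DD^{{n,n}}-property. -/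
/-- `f` and `g` are `𝒰`-homotopic: there is a homotopy between them each of whose
tracks lies in a single member of `𝒰`. -/
def CovHomotopic {X M : Type*} [TopologicalSpace X] [TopologicalSpace M]
    (f g : C(X, M)) (𝒰 : Set (Set M)) : Prop :=
  ∃ H : ContinuousMap.Homotopy f g,
    ∀ x : X, ∃ U ∈ 𝒰, (Set.range fun t : unitInterval => H (t, x)) ⊆ U

/-- `Y` has the `∞-DD^{0,0}`-property: for every open cover `𝒱` of `Y`, every
zero-dimensional map `g_X : Iⁿ ⊕ Iⁿ → X` and every map `f_Y : Iⁿ ⊕ Iⁿ → Y`, there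
is a map `g_Y`, `𝒱`-homotopic to `f_Y`, injective on each fiber of `g_X`. -/
def InftyDD00 (Y : Type*) [TopologicalSpace Y] : Prop :=
  ∀ (n : ℕ) (X : Type) (_ : MetricSpace X)
    (gX : C(Cube n ⊕ Cube n, X)), ZeroDimFibers ⇑gX →
    ∀ 𝒱 : Set (Set Y), (∀ V ∈ 𝒱, IsOpen V) → ⋃₀ 𝒱 = Set.univ →
      ∀ fY : C(Cube n ⊕ Cube n, Y), ∃ gY : C(Cube n ⊕ Cube n, Y),
        CovHomotopic fY gY 𝒱 ∧
        ∀ a b : Cube n ⊕ Cube n, gX a = gX b → gY a = gY b → a = b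

/-!
Move the `X`-coordinates of `f` and `g` by `ε`-homotopies to zero-dimensional maps `f_X`, `g_X`.
Then apply `∞-DD^{0,0}` on `Iⁿ ⊕ Iⁿ` to the combined map `f_X ⊔ g_X` and the combined
`Y`-coordinates, with the cover of `Y` by `ε/3`-balls: the resulting `g_Y` makes the diagonal
map `(f_X ⊔ g_X, g_Y)` injective, so its restrictions to the two summands have disjoint images,
and the product of the `X`- and `Y`-homotopies has tracks of diameter `< ε`.
-/

open Set Function Metric Topology

universe u

lemma DimLE0.of_isCompl_range {A B S : Type*} [TopologicalSpace A] [TopologicalSpace B]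
    [TopologicalSpace S] {j₁ : A → S} {j₂ : B → S} (h₁ : IsOpenEmbedding j₁)
    (h₂ : IsOpenEmbedding j₂) (hc : IsCompl (range j₁) (range j₂))
    (hA : DimLE0 A) (hB : DimLE0 B) : DimLE0 S := by
  intro ι U hι hUo hU
  obtain ⟨V₁, hV₁o, hV₁U, hV₁d, hV₁⟩ := hA ι (fun i => j₁ ⁻¹' U i) hι
    (fun i => (hUo i).preimage h₁.continuous) (by rw [← preimage_iUnion, hU, preimage_univ])
  obtain ⟨V₂, hV₂o, hV₂U, hV₂d, hV₂⟩ := hB ι (fun i => j₂ ⁻¹' U i) hι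
    (fun i => (hUo i).preimage h₂.continuous) (by rw [← preimage_iUnion, hU, preimage_univ])
  refine ⟨fun i => j₁ '' V₁ i ∪ j₂ '' V₂ i,
    fun i => (h₁.isOpenMap _ (hV₁o i)).union (h₂.isOpenMap _ (hV₂o i)),
    fun i => union_subset ((image_mono (hV₁U i)).trans (image_preimage_subset _ _))
      ((image_mono (hV₂U i)).trans (image_preimage_subset _ _)), fun i j hij => ?_, ?_⟩
  · have h₁₂ : ∀ s t, Disjoint (j₁ '' s) (j₂ '' t) := fun s t =>
      hc.disjoint.mono (image_subset_range _ _) (image_subset_range _ _)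
    simp only [onFun, disjoint_union_left, disjoint_union_right]
    exact ⟨⟨(disjoint_image_iff h₁.injective).2 (hV₁d hij), (h₁₂ _ _).symm⟩,
      h₁₂ _ _, (disjoint_image_iff h₂.injective).2 (hV₂d hij)⟩
  · rw [iUnion_union_distrib, ← image_iUnion, ← image_iUnion, hV₁, hV₂, image_univ,
      image_univ]
    exact hc.sup_eq_top

lemma ZeroDimFibers.sumElim {α β γ : Type*} [TopologicalSpace α] [TopologicalSpace β]
    [TopologicalSpace γ] {f : α → γ} {g : β → γ} (hf : ZeroDimFibers f)
    (hg : ZeroDimFibers g) : ZeroDimFibers (Sum.elim f g) := fun y =>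
  DimLE0.of_isCompl_range (IsOpenEmbedding.inl.restrictPreimage _)
    (IsOpenEmbedding.inr.restrictPreimage _)
    (by simpa only [range_restrictPreimage] using isCompl_range_inl_range_inr.preimage _)
    (hf y) (hg y)

lemma ZeroDimFibers.of_fibers_eq {K Z W : Type*} [TopologicalSpace K] [TopologicalSpace Z]
    [TopologicalSpace W] {q : K → Z} {g : K → W} (hq : Surjective q)
    (hfib : ∀ a b, q a = q b ↔ g a = g b) (hg : ZeroDimFibers g) : ZeroDimFibers q := by
  intro z
  obtain ⟨b, rfl⟩ := hq z
  have hfiber : q ⁻¹' {q b} = g ⁻¹' {g b} := ext fun a => hfib a b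
  rw [hfiber]
  exact hg (g b)

def InducedDist {K : Type u} {X : Type*} [MetricSpace X] (_g : K → X) : Type u := K

instance {K : Type u} {X : Type*} [MetricSpace X] (g : K → X) :
    PseudoMetricSpace (InducedDist g) :=
  PseudoMetricSpace.induced g inferInstance

/-- `InftyDD00` only quantifies over targets in `Type`: this replaces `g` by a map with the same
fibers into the metric quotient of the pseudometric pulled back along `g`, which lives in the
universe of `K`. -/
lemma exists_metricSpace_with_same_fibers {K : Type u} [TopologicalSpace K] {X : Type*}
    [MetricSpace X] (g : C(K, X)) :
    ∃ (Z : Type u) (_ : MetricSpace Z) (q : C(K, Z)), Surjective q ∧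
      ∀ a b, q a = q b ↔ g a = g b := by
  let q : K → SeparationQuotient (InducedDist g) := SeparationQuotient.mk (X := InducedDist g)
  refine ⟨_, inferInstance, ⟨q, ?_⟩, SeparationQuotient.surjective_mk (X := InducedDist g),
    fun a b => ?_⟩
  · exact SeparationQuotient.continuous_mk.comp (continuous_induced_rng.2 g.continuous)
  · exact SeparationQuotient.mk_eq_mk.trans (Metric.inseparable_iff.trans dist_eq_zero)

lemma EHomotopic.compContinuousMap {K L M : Type*} [TopologicalSpace K] [TopologicalSpace L]
    [MetricSpace M] {f g : C(L, M)} {ε : ℝ} (h : EHomotopic f g ε) (k : C(K, L)) :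
    EHomotopic (f.comp k) (g.comp k) ε := by
  obtain ⟨H, hH⟩ := h
  exact ⟨H.compContinuousMap k, fun x => hH (k x)⟩

lemma diam_range_prodMk_le {T M N : Type*} [MetricSpace M] [MetricSpace N] {u : T → M}
    {v : T → N} (hu : Bornology.IsBounded (range u)) (hv : Bornology.IsBounded (range v)) :
    diam (range fun t => (u t, v t)) ≤ max (diam (range u)) (diam (range v)) := by
  refine diam_le_of_forall_dist_le (le_max_of_le_left diam_nonneg) ?_
  rintro _ ⟨t, rfl⟩ _ ⟨s, rfl⟩
  rw [Prod.dist_eq]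
  exact max_le_max (dist_le_diam_of_mem hu (mem_range_self t) (mem_range_self s))
    (dist_le_diam_of_mem hv (mem_range_self t) (mem_range_self s))

lemma EHomotopic.prodMk {K M N : Type*} [TopologicalSpace K] [MetricSpace M] [MetricSpace N]
    {f₀ f₁ : C(K, M)} {g₀ g₁ : C(K, N)} {ε : ℝ} (hf : EHomotopic f₀ f₁ ε)
    (hg : EHomotopic g₀ g₁ ε) : EHomotopic (f₀.prodMk g₀) (f₁.prodMk g₁) ε := by
  obtain ⟨F, hF⟩ := hf
  obtain ⟨G, hG⟩ := hg
  refine ⟨F.prodMk G, fun x => ?_⟩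
  calc diam (range fun t => (F (t, x), G (t, x)))
      ≤ max (diam (range fun t => F (t, x))) (diam (range fun t => G (t, x))) :=
        diam_range_prodMk_le
          (isCompact_range (F.continuous.comp (Continuous.prodMk_left x))).isBounded
          (isCompact_range (G.continuous.comp (Continuous.prodMk_left x))).isBounded
    _ < ε := max_lt (hF x) (hG x)

lemma CovHomotopic.eHomotopic_of_balls {K M : Type*} [TopologicalSpace K] [MetricSpace M]
    {f g : C(K, M)} {r ε : ℝ} (h : CovHomotopic f g (range fun c => ball c r))
    (hr : 2 * r < ε) : EHomotopic f g ε := by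
  obtain ⟨H, hH⟩ := h
  refine ⟨H, fun x => ?_⟩
  obtain ⟨_, ⟨c, rfl⟩, hsub⟩ := hH x
  have hr₀ : 0 < r := nonempty_ball.1 ⟨_, hsub (mem_range_self 0)⟩
  calc diam (range fun t : unitInterval => H (t, x))
      ≤ diam (ball c r) := diam_mono hsub isBounded_ball
    _ ≤ 2 * r := diam_ball hr₀.le
    _ < ε := hr

lemma range_comp_inl_inter_range_comp_inr {α β γ : Type*} {F : α ⊕ β → γ}
    (hF : Injective F) :
    range (F ∘ Sum.inl) ∩ range (F ∘ Sum.inr) = ∅ := by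
  rw [range_comp, range_comp, ← disjoint_iff_inter_eq_empty, disjoint_image_iff hF]
  exact isCompl_range_inl_range_inr.disjoint

/-- If `X` has the `AP(n,0)`-property and `Y` has the `∞-DD^{0,0}`-property, then
`X × Y` has the `DD^{n,n}`-property: any two maps `Iⁿ → X × Y` are, for each
`ε > 0`, `ε`-homotopic to maps with disjoint images. -/
theorem stmt16 {X Y : Type*} [MetricSpace X] [MetricSpace Y] (n : ℕ)
    (hX : AP X n) (hY : InftyDD00 Y) :
    ∀ ε : ℝ, 0 < ε → ∀ f g : C(Cube n, X × Y),
      ∃ f' g' : C(Cube n, X × Y), EHomotopic f f' ε ∧ EHomotopic g g' ε ∧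
        Set.range ⇑f' ∩ Set.range ⇑g' = ∅ := by
  intro ε hε f g
  obtain ⟨fX, hfX, hf⟩ := hX ε hε (ContinuousMap.fst.comp f)
  obtain ⟨gX, hgX, hg⟩ := hX ε hε (ContinuousMap.fst.comp g)
  let inl : C(Cube n, Cube n ⊕ Cube n) := ⟨Sum.inl, continuous_inl⟩
  let inr : C(Cube n, Cube n ⊕ Cube n) := ⟨Sum.inr, continuous_inr⟩
  let fgX : C(Cube n ⊕ Cube n, X) := ⟨Sum.elim fX gX, fX.continuous.sumElim gX.continuous⟩
  let fgY : C(Cube n ⊕ Cube n, Y) :=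
    ⟨Sum.elim (Prod.snd ∘ f) (Prod.snd ∘ g),
      (continuous_snd.comp f.continuous).sumElim (continuous_snd.comp g.continuous)⟩
  obtain ⟨Z, _, q, hq, hqfib⟩ := exists_metricSpace_with_same_fibers fgX
  obtain ⟨gY, hgY, hinj⟩ := hY n Z _ q ((hfX.sumElim hgX).of_fibers_eq hq hqfib)
    (range fun c => ball c (ε / 3)) (forall_mem_range.2 fun _ => isOpen_ball)
    (sUnion_eq_univ_iff.2 fun y => ⟨_, mem_range_self y, mem_ball_self (by positivity)⟩) fgY
  have hYε : EHomotopic fgY gY ε := hgY.eHomotopic_of_balls (by linarith)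
  have hdiag : Injective fun p => (fgX p, gY p) := fun a b hab =>
    hinj a b ((hqfib a b).2 (congrArg Prod.fst hab)) (congrArg Prod.snd hab)
  exact ⟨fX.prodMk (gY.comp inl), gX.prodMk (gY.comp inr),
    hf.prodMk (hYε.compContinuousMap inl), hg.prodMk (hYε.compContinuousMap inr),
    range_comp_inl_inter_range_comp_inr hdiag⟩
end
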